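/- arXiv:2404.01821 — 4 statements merged into one kernel-verified Lean document; each statement's English description precedes it below -/
import Mathlib

section
/- For every odd positive integer i, the element x_1^i + x_2^i + ⋯ + x_n^i is central in the Brauer algebra B(n,N). -/
noncomputable section

open scoped BigOperators

/-- Index type for the generators of the Brauer algebra `B(n,N)`:
`Sum.inl` indexes the generators `s₁,…,s_{n-1}` and `Sum.inr` the
generators `t₁,…,t_{n-1}` (0-based internally). -/
abbrev BIdx (n : ℕ) := Fin (n - 1) ⊕ Fin (n - 1)

/-- The generator `s_k` (1-based) in the free algebra. -/
def bS (n : ℕ) (k : ℕ) : FreeAlgebra ℂ (BIdx n) :=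
  if h : 1 ≤ k ∧ k ≤ n - 1 then FreeAlgebra.ι ℂ (Sum.inl ⟨k - 1, by omega⟩) else 0

/-- The generator `t_k` (1-based) in the free algebra. -/
def bT (n : ℕ) (k : ℕ) : FreeAlgebra ℂ (BIdx n) :=
  if h : 1 ≤ k ∧ k ≤ n - 1 then FreeAlgebra.ι ℂ (Sum.inr ⟨k - 1, by omega⟩) else 0

/-- The defining relations of the Brauer algebra `B(n,N)`. -/
inductive BrauerRel (n : ℕ) (N : ℂ) :
    FreeAlgebra ℂ (BIdx n) → FreeAlgebra ℂ (BIdx n) → Prop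
  | s_sq (k : ℕ) (h : 1 ≤ k ∧ k ≤ n - 1) :
      BrauerRel n N (bS n k * bS n k) 1
  | t_sq (k : ℕ) (h : 1 ≤ k ∧ k ≤ n - 1) :
      BrauerRel n N (bT n k * bT n k) (N • bT n k)
  | st (k : ℕ) (h : 1 ≤ k ∧ k ≤ n - 1) :
      BrauerRel n N (bS n k * bT n k) (bT n k)
  | ts (k : ℕ) (h : 1 ≤ k ∧ k ≤ n - 1) :
      BrauerRel n N (bT n k * bS n k) (bT n k)
  | braid (k : ℕ) (h : 1 ≤ k ∧ k + 1 ≤ n - 1) :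
      BrauerRel n N (bS n k * bS n (k+1) * bS n k) (bS n (k+1) * bS n k * bS n (k+1))
  | ttt_lo (k : ℕ) (h : 1 ≤ k ∧ k + 1 ≤ n - 1) :
      BrauerRel n N (bT n k * bT n (k+1) * bT n k) (bT n k)
  | ttt_hi (k : ℕ) (h : 1 ≤ k ∧ k + 1 ≤ n - 1) :
      BrauerRel n N (bT n (k+1) * bT n k * bT n (k+1)) (bT n (k+1))
  | stt (k : ℕ) (h : 1 ≤ k ∧ k + 1 ≤ n - 1) :
      BrauerRel n N (bS n k * bT n (k+1) * bT n k) (bS n (k+1) * bT n k)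
  | tts (k : ℕ) (h : 1 ≤ k ∧ k + 1 ≤ n - 1) :
      BrauerRel n N (bT n (k+1) * bT n k * bS n (k+1)) (bT n (k+1) * bS n k)
  | ss_comm (k l : ℕ)
      (h : 1 ≤ k ∧ k ≤ n - 1 ∧ 1 ≤ l ∧ l ≤ n - 1 ∧ (k + 1 < l ∨ l + 1 < k)) :
      BrauerRel n N (bS n k * bS n l) (bS n l * bS n k)
  | ts_comm (k l : ℕ)
      (h : 1 ≤ k ∧ k ≤ n - 1 ∧ 1 ≤ l ∧ l ≤ n - 1 ∧ (k + 1 < l ∨ l + 1 < k)) :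
      BrauerRel n N (bT n k * bS n l) (bS n l * bT n k)
  | tt_comm (k l : ℕ)
      (h : 1 ≤ k ∧ k ≤ n - 1 ∧ 1 ≤ l ∧ l ≤ n - 1 ∧ (k + 1 < l ∨ l + 1 < k)) :
      BrauerRel n N (bT n k * bT n l) (bT n l * bT n k)

/-- The Brauer algebra `B(n,N)`. -/
abbrev BrauerAlgebra (n : ℕ) (N : ℂ) := RingQuot (BrauerRel n N)

/-- The generator `s_k` (1-based) of `B(n,N)`. -/
def sB (n : ℕ) (N : ℂ) (k : ℕ) : BrauerAlgebra n N :=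
  RingQuot.mkAlgHom ℂ (BrauerRel n N) (bS n k)

/-- The generator `t_k` (1-based) of `B(n,N)`. -/
def tB (n : ℕ) (N : ℂ) (k : ℕ) : BrauerAlgebra n N :=
  RingQuot.mkAlgHom ℂ (BrauerRel n N) (bT n k)

/-- The element `σ_{k,l} = s_{l−1} s_{l−2} ⋯ s_{k+1}` of `B(n,N)`. -/
def sigmaB (n : ℕ) (N : ℂ) (k l : ℕ) : BrauerAlgebra n N :=
  ((List.range (l - 1 - k)).map (fun j => sB n N (l - 1 - j))).prod

/-- The element `σ_{k,l}⁻¹ = s_{k+1} s_{k+2} ⋯ s_{l−1}` of `B(n,N)`. -/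
def sigmaBInv (n : ℕ) (N : ℂ) (k l : ℕ) : BrauerAlgebra n N :=
  ((List.range (l - 1 - k)).map (fun j => sB n N (k + 1 + j))).prod

/-- The transposition `(k,l) = σ_{k,l} s_k σ_{k,l}⁻¹` in `B(n,N)` (`k < l`). -/
def transpB (n : ℕ) (N : ℂ) (k l : ℕ) : BrauerAlgebra n N :=
  sigmaB n N k l * sB n N k * sigmaBInv n N k l

/-- The element `ov(k,l) = σ_{k,l} t_k σ_{k,l}⁻¹` in `B(n,N)` (`k < l`). -/
def ovB (n : ℕ) (N : ℂ) (k l : ℕ) : BrauerAlgebra n N :=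
  sigmaB n N k l * tB n N k * sigmaBInv n N k l

/-- The Jucys–Murphy element
`x_k = (N−1)/2 + Σ_{l=1}^{k−1} ((l,k) − ov(l,k))` of `B(n,N)` (1-based). -/
def xB (n : ℕ) (N : ℂ) (k : ℕ) : BrauerAlgebra n N :=
  algebraMap ℂ (BrauerAlgebra n N) ((N - 1) / 2)
    + ∑ l ∈ Finset.range (k - 1), (transpB n N (l + 1) k - ovB n N (l + 1) k)

/-- The subalgebra `B(m,N)` of `B(n,N)` generated by
`s₁,…,s_{m−1}, t₁,…,t_{m−1}`. -/
def Bsub (n : ℕ) (N : ℂ) (m : ℕ) : Subalgebra ℂ (BrauerAlgebra n N) :=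
  Algebra.adjoin ℂ
    {x | ∃ k, 1 ≤ k ∧ k ≤ m - 1 ∧ (x = sB n N k ∨ x = tB n N k)}


namespace BrauerProof

variable {n : ℕ} {N : ℂ}

local notation "𝔅" => BrauerAlgebra n N
local notation "π" => RingQuot.mkAlgHom ℂ (BrauerRel n N)
local notation "s" => sB n N
local notation "t" => tB n N

lemma quot_rel {x y : FreeAlgebra ℂ (BIdx n)} (h : BrauerRel n N x y) : π x = π y :=
  RingQuot.mkAlgHom_rel ℂ h

-- basic relations in the quotient
lemma ss {k : ℕ} (h : 1 ≤ k ∧ k ≤ n - 1) : s k * s k = 1 := by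
  have := quot_rel (N := N) (BrauerRel.s_sq k h)
  simpa [sB, map_mul, map_one] using this

lemma tt {k : ℕ} (h : 1 ≤ k ∧ k ≤ n - 1) : t k * t k = N • t k := by
  have := quot_rel (N := N) (BrauerRel.t_sq k h)
  simpa [tB, map_mul] using this

lemma st {k : ℕ} (h : 1 ≤ k ∧ k ≤ n - 1) : s k * t k = t k := by
  have := quot_rel (N := N) (BrauerRel.st k h)
  simpa [sB, tB, map_mul] using this

lemma ts {k : ℕ} (h : 1 ≤ k ∧ k ≤ n - 1) : t k * s k = t k := by
  have := quot_rel (N := N) (BrauerRel.ts k h)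
  simpa [sB, tB, map_mul] using this

lemma braid {k : ℕ} (h : 1 ≤ k ∧ k + 1 ≤ n - 1) :
    s k * s (k+1) * s k = s (k+1) * s k * s (k+1) := by
  have := quot_rel (N := N) (BrauerRel.braid k h)
  simpa [sB, map_mul] using this

lemma ttt_lo {k : ℕ} (h : 1 ≤ k ∧ k + 1 ≤ n - 1) : t k * t (k+1) * t k = t k := by
  have := quot_rel (N := N) (BrauerRel.ttt_lo k h)
  simpa [tB, map_mul] using this

lemma ttt_hi {k : ℕ} (h : 1 ≤ k ∧ k + 1 ≤ n - 1) : t (k+1) * t k * t (k+1) = t (k+1) := by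
  have := quot_rel (N := N) (BrauerRel.ttt_hi k h)
  simpa [tB, map_mul] using this

lemma stt {k : ℕ} (h : 1 ≤ k ∧ k + 1 ≤ n - 1) : s k * t (k+1) * t k = s (k+1) * t k := by
  have := quot_rel (N := N) (BrauerRel.stt k h)
  simpa [sB, tB, map_mul] using this

lemma tts {k : ℕ} (h : 1 ≤ k ∧ k + 1 ≤ n - 1) : t (k+1) * t k * s (k+1) = t (k+1) * s k := by
  have := quot_rel (N := N) (BrauerRel.tts k h)
  simpa [sB, tB, map_mul] using this

lemma s_zero {k : ℕ} (h : ¬ (1 ≤ k ∧ k ≤ n - 1)) : (s k : 𝔅) = 0 := by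
  simp [sB, bS, h]

lemma t_zero {k : ℕ} (h : ¬ (1 ≤ k ∧ k ≤ n - 1)) : (t k : 𝔅) = 0 := by
  simp [tB, bT, h]

-- unconditional distant commutation
lemma comm_ss {k l : ℕ} (h : k + 1 < l ∨ l + 1 < k) : Commute (s k) (s l) := by
  by_cases hk : 1 ≤ k ∧ k ≤ n - 1
  · by_cases hl : 1 ≤ l ∧ l ≤ n - 1
    · have := quot_rel (N := N) (BrauerRel.ss_comm k l ⟨hk.1, hk.2, hl.1, hl.2, h⟩)
      simpa [sB, map_mul, Commute, SemiconjBy] using this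
    · simp [Commute, SemiconjBy, s_zero hl]
  · simp [Commute, SemiconjBy, s_zero hk]

lemma comm_ts {k l : ℕ} (h : k + 1 < l ∨ l + 1 < k) : Commute (t k) (s l) := by
  by_cases hk : 1 ≤ k ∧ k ≤ n - 1
  · by_cases hl : 1 ≤ l ∧ l ≤ n - 1
    · have := quot_rel (N := N) (BrauerRel.ts_comm k l ⟨hk.1, hk.2, hl.1, hl.2, h⟩)
      simpa [sB, tB, map_mul, Commute, SemiconjBy] using this
    · simp [Commute, SemiconjBy, s_zero hl]
  · simp [Commute, SemiconjBy, t_zero hk]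

lemma comm_tt {k l : ℕ} (h : k + 1 < l ∨ l + 1 < k) : Commute (t k) (t l) := by
  by_cases hk : 1 ≤ k ∧ k ≤ n - 1
  · by_cases hl : 1 ≤ l ∧ l ≤ n - 1
    · have := quot_rel (N := N) (BrauerRel.tt_comm k l ⟨hk.1, hk.2, hl.1, hl.2, h⟩)
      simpa [tB, map_mul, Commute, SemiconjBy] using this
    · simp [Commute, SemiconjBy, t_zero hl]
  · simp [Commute, SemiconjBy, t_zero hk]

lemma comm_st {k l : ℕ} (h : k + 1 < l ∨ l + 1 < k) : Commute (s k) (t l) :=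
  (comm_ts (k := l) (l := k) (by omega)).symm

end BrauerProof

namespace BrauerProof
variable {n : ℕ} {N : ℂ}
local notation "𝔅" => BrauerAlgebra n N
local notation "s" => sB n N
local notation "t" => tB n N

-- context helpers
lemma ctx21 {a b c x : 𝔅} (h : a * b = c) : a * (b * x) = c * x := by
  rw [← mul_assoc, h]
lemma ctx22 {a b c d x : 𝔅} (h : a * b = c * d) : a * (b * x) = c * (d * x) := by
  rw [← mul_assoc, h, mul_assoc]
lemma ctx23 {a b c d e x : 𝔅} (h : a * b = c * (d * e)) : a * (b * x) = c * (d * (e * x)) := by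
  rw [← mul_assoc, h, mul_assoc, mul_assoc]
lemma ctx31 {a b c d x : 𝔅} (h : a * (b * c) = d) : a * (b * (c * x)) = d * x := by
  rw [← mul_assoc] at h
  rw [← mul_assoc, ← mul_assoc, h]
lemma ctx32 {a b c d e x : 𝔅} (h : a * (b * c) = d * e) : a * (b * (c * x)) = d * (e * x) := by
  rw [← mul_assoc] at h
  rw [← mul_assoc, ← mul_assoc, h, mul_assoc]
lemma ctx33 {a b c d e f x : 𝔅} (h : a * (b * c) = d * (e * f)) :
    a * (b * (c * x)) = d * (e * (f * x)) := by
  rw [← mul_assoc] at h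
  rw [← mul_assoc, ← mul_assoc, h, mul_assoc, mul_assoc]

lemma hlo {k : ℕ} (h : 1 ≤ k ∧ k + 1 ≤ n - 1) : 1 ≤ k ∧ k ≤ n - 1 := ⟨h.1, by omega⟩
lemma hhi {k : ℕ} (h : 1 ≤ k ∧ k + 1 ≤ n - 1) : 1 ≤ k + 1 ∧ k + 1 ≤ n - 1 := ⟨by omega, h.2⟩

-- right-assoc versions of the defining relations
lemma stt' {k : ℕ} (h : 1 ≤ k ∧ k + 1 ≤ n - 1) :
    s k * (t (k+1) * t k) = s (k+1) * t k := by rw [← mul_assoc]; exact stt h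
lemma tts' {k : ℕ} (h : 1 ≤ k ∧ k + 1 ≤ n - 1) :
    t (k+1) * (t k * s (k+1)) = t (k+1) * s k := by rw [← mul_assoc]; exact tts h
lemma ttt_lo' {k : ℕ} (h : 1 ≤ k ∧ k + 1 ≤ n - 1) :
    t k * (t (k+1) * t k) = t k := by rw [← mul_assoc]; exact ttt_lo h
lemma ttt_hi' {k : ℕ} (h : 1 ≤ k ∧ k + 1 ≤ n - 1) :
    t (k+1) * (t k * t (k+1)) = t (k+1) := by rw [← mul_assoc]; exact ttt_hi h
lemma braid' {k : ℕ} (h : 1 ≤ k ∧ k + 1 ≤ n - 1) :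
    s k * (s (k+1) * s k) = s (k+1) * (s k * s (k+1)) := by
  rw [← mul_assoc, ← mul_assoc]; exact braid h

-- F identities
lemma F1 {k : ℕ} (h : 1 ≤ k ∧ k + 1 ≤ n - 1) :
    s k * t (k+1) = s (k+1) * (t k * t (k+1)) := by
  have e1 : s k * t (k+1) = s k * (t (k+1) * (t k * t (k+1))) := by rw [ttt_hi' h]
  rw [e1, ctx32 (stt' h)]
lemma F2 {k : ℕ} (h : 1 ≤ k ∧ k + 1 ≤ n - 1) :
    t k * s (k+1) = t k * (t (k+1) * s k) := by
  have e1 : t k * s (k+1) = t k * (t (k+1) * (t k * s (k+1))) := (ctx31 (ttt_lo' h)).symm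
  rw [e1, tts' h]

-- E identities
lemma E1 {k : ℕ} (h : 1 ≤ k ∧ k + 1 ≤ n - 1) :
    t k * (s (k+1) * s k) = t k * t (k+1) := by
  rw [ctx23 (F2 h), ss (hlo h), mul_one]
lemma E2 {k : ℕ} (h : 1 ≤ k ∧ k + 1 ≤ n - 1) :
    s (k+1) * (s k * t (k+1)) = t k * t (k+1) := by
  rw [F1 h, ← mul_assoc, ss (hhi h), one_mul]
lemma E3 {k : ℕ} (h : 1 ≤ k ∧ k + 1 ≤ n - 1) :
    s k * (s (k+1) * t k) = t (k+1) * t k := by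
  rw [show s (k+1) * t k = s k * (t (k+1) * t k) from (stt' h).symm,
    ← mul_assoc, ss (hlo h), one_mul]
lemma E4 {k : ℕ} (h : 1 ≤ k ∧ k + 1 ≤ n - 1) :
    t (k+1) * (s k * s (k+1)) = t (k+1) * t k := by
  rw [ctx23 (tts' h).symm, ss (hhi h), mul_one]
lemma E5 {k : ℕ} (h : 1 ≤ k ∧ k + 1 ≤ n - 1) :
    s k * (t (k+1) * s k) = s (k+1) * (t k * s (k+1)) := by
  rw [ctx23 (F1 h), ← tts' h, ctx31 (ttt_lo' h)]
lemma E6a {k : ℕ} (h : 1 ≤ k ∧ k + 1 ≤ n - 1) :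
    t k * (s (k+1) * t k) = t k := by
  rw [ctx23 (F2 h), st (hlo h), ttt_lo' h]
lemma E6b {k : ℕ} (h : 1 ≤ k ∧ k + 1 ≤ n - 1) :
    t (k+1) * (s k * t (k+1)) = t (k+1) := by
  rw [ctx23 (tts' h).symm, st (hhi h), ttt_hi' h]
lemma E7a {k : ℕ} (h : 1 ≤ k ∧ k + 1 ≤ n - 1) :
    s k * (s (k+1) * (t k * (s (k+1) * s k))) = t (k+1) := by
  rw [E1 h, ctx32 (E3 h), ttt_hi' h]
lemma E7b {k : ℕ} (h : 1 ≤ k ∧ k + 1 ≤ n - 1) :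
    s (k+1) * (s k * (t (k+1) * (s k * s (k+1)))) = t k := by
  rw [E4 h, ctx32 (E2 h), ttt_lo' h]
-- pair-conjugation identities
lemma P1 {k : ℕ} (h : 1 ≤ k ∧ k + 1 ≤ n - 1) :
    t k * (s (k+1) * s k) = s (k+1) * (s k * t (k+1)) := by
  rw [E1 h, E2 h]
lemma P2 {k : ℕ} (h : 1 ≤ k ∧ k + 1 ≤ n - 1) :
    s k * (s (k+1) * t k) = t (k+1) * (s k * s (k+1)) := by
  rw [E3 h, E4 h]

end BrauerProof

namespace BrauerProof
variable {n : ℕ} {N : ℂ}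
local notation "𝔅" => BrauerAlgebra n N
local notation "s" => sB n N
local notation "t" => tB n N
local notation "σ" => sigmaB n N
local notation "σ!" => sigmaBInv n N

lemma sigma_one {k l : ℕ} (h : l ≤ k + 1) : σ k l = 1 := by
  have : l - 1 - k = 0 := by omega
  simp [sigmaB, this]

lemma sigmaInv_one {k l : ℕ} (h : l ≤ k + 1) : σ! k l = 1 := by
  have : l - 1 - k = 0 := by omega
  simp [sigmaBInv, this]

lemma sigma_cons {k l : ℕ} (h : k < l) : σ k (l+1) = s l * σ k l := by
  have e : (List.range (l + 1 - 1 - k)).map (fun j => s (l + 1 - 1 - j))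
      = s l :: (List.range (l - 1 - k)).map (fun j => s (l - 1 - j)) := by
    rw [show l + 1 - 1 - k = (l - 1 - k) + 1 by omega, List.range_succ_eq_map,
      List.map_cons, List.map_map]
    refine congrArg₂ _ ?_ (List.map_congr_left ?_)
    · show sB n N (l + 1 - 1 - 0) = sB n N l
      congr 1
    · intro a _; simp only [Function.comp_apply]; congr 1; omega
  unfold sigmaB
  rw [e, List.prod_cons]

lemma sigma_snoc {k l : ℕ} (h : k + 1 < l) : σ k l = σ (k+1) l * s (k+1) := by
  have e : (List.range (l - 1 - k)).map (fun j => s (l - 1 - j))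
      = (List.range (l - 1 - (k+1))).map (fun j => s (l - 1 - j)) ++ [s (k+1)] := by
    rw [show l - 1 - k = (l - 1 - (k+1)) + 1 by omega, List.range_succ, List.map_append]
    refine congrArg₂ _ rfl ?_
    simp only [List.map_cons, List.map_nil]
    congr 2
    omega
  unfold sigmaB
  rw [e, List.prod_append, List.prod_cons, List.prod_nil, mul_one]

lemma sigmaInv_cons {k l : ℕ} (h : k < l) : σ! k (l+1) = σ! k l * s l := by
  have e : (List.range (l + 1 - 1 - k)).map (fun j => s (k + 1 + j))
      = (List.range (l - 1 - k)).map (fun j => s (k + 1 + j)) ++ [s l] := by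
    rw [show l + 1 - 1 - k = (l - 1 - k) + 1 by omega, List.range_succ, List.map_append]
    refine congrArg₂ _ rfl ?_
    simp only [List.map_cons, List.map_nil]
    congr 2
    omega
  unfold sigmaBInv
  rw [e, List.prod_append, List.prod_cons, List.prod_nil, mul_one]

lemma sigmaInv_snoc {k l : ℕ} (h : k + 1 < l) : σ! k l = s (k+1) * σ! (k+1) l := by
  have e : (List.range (l - 1 - k)).map (fun j => s (k + 1 + j))
      = s (k+1) :: (List.range (l - 1 - (k+1))).map (fun j => s (k + 1 + 1 + j)) := by
    rw [show l - 1 - k = (l - 1 - (k+1)) + 1 by omega, List.range_succ_eq_map,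
      List.map_cons, List.map_map]
    refine congrArg₂ _ ?_ (List.map_congr_left ?_)
    · show sB n N (k + 1 + 0) = sB n N (k+1)
      congr 1
    · intro a _; simp only [Function.comp_apply]; congr 1; omega
  unfold sigmaBInv
  rw [e, List.prod_cons]

lemma sigma_split {k j l : ℕ} (h1 : k < j) (h2 : j ≤ l) :
    σ k l = σ (j-1) l * σ k j := by
  unfold sigmaB
  have ha : l - 1 - k = (l - 1 - (j-1)) + (j - 1 - k) := by omega
  rw [ha, List.range_add, List.map_append, List.prod_append, List.map_map]
  refine congrArg₂ _ rfl (congrArg _ (List.map_congr_left ?_))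
  intro a _
  simp only [Function.comp_apply]
  congr 1
  omega

lemma sigmaInv_split {k j l : ℕ} (h1 : k < j) (h2 : j ≤ l) :
    σ! k l = σ! k j * σ! (j-1) l := by
  unfold sigmaBInv
  have ha : l - 1 - k = (j - 1 - k) + (l - 1 - (j-1)) := by omega
  rw [ha, List.range_add, List.map_append, List.prod_append, List.map_map]
  refine congrArg₂ _ rfl (congrArg _ (List.map_congr_left ?_))
  intro a _
  simp only [Function.comp_apply]
  congr 1
  omega

lemma comm_sigma {k l : ℕ} {a : 𝔅} (H : ∀ j, k < j → j < l → Commute a (s j)) :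
    Commute a (σ k l) := by
  apply Commute.list_prod_right
  intro x hx
  simp only [List.mem_map, List.mem_range] at hx
  obtain ⟨j, hj, rfl⟩ := hx
  exact H _ (by omega) (by omega)

lemma comm_sigmaInv {k l : ℕ} {a : 𝔅} (H : ∀ j, k < j → j < l → Commute a (s j)) :
    Commute a (σ! k l) := by
  apply Commute.list_prod_right
  intro x hx
  simp only [List.mem_map, List.mem_range] at hx
  obtain ⟨j, hj, rfl⟩ := hx
  exact H _ (by omega) (by omega)

end BrauerProof

namespace BrauerProof
variable {n : ℕ} {N : ℂ}
local notation "𝔅" => BrauerAlgebra n N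
local notation "s" => sB n N
local notation "t" => tB n N
local notation "σ" => sigmaB n N
local notation "σ!" => sigmaBInv n N
local notation "τ" => transpB n N
local notation "ω" => ovB n N

lemma transp_def {l m : ℕ} : τ l m = σ l m * (s l * σ! l m) := by
  unfold transpB; rw [mul_assoc]

lemma ov_def {l m : ℕ} : ω l m = σ l m * (t l * σ! l m) := by
  unfold ovB; rw [mul_assoc]

lemma transp_adj {l : ℕ} : τ l (l+1) = s l := by
  rw [transp_def, sigma_one (by omega), sigmaInv_one (by omega), one_mul, mul_one]

lemma ov_adj {l : ℕ} : ω l (l+1) = t l := by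
  rw [ov_def, sigma_one (by omega), sigmaInv_one (by omega), one_mul, mul_one]

lemma transp_top {l k : ℕ} (h : l < k) : τ l (k+1) = s k * (τ l k * s k) := by
  rw [transp_def, transp_def, sigma_cons h, sigmaInv_cons h]
  simp only [mul_assoc]

lemma ov_top {l k : ℕ} (h : l < k) : ω l (k+1) = s k * (ω l k * s k) := by
  rw [ov_def, ov_def, sigma_cons h, sigmaInv_cons h]
  simp only [mul_assoc]

lemma transp_decomp {l m : ℕ} (h : l + 1 < m) :
    τ l m = σ (l+1) m * (s (l+1) * (s l * (s (l+1) * σ! (l+1) m))) := by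
  rw [transp_def, sigma_snoc h, sigmaInv_snoc h]
  simp only [mul_assoc]

lemma ov_decomp {l m : ℕ} (h : l + 1 < m) :
    ω l m = σ (l+1) m * (s (l+1) * (t l * (s (l+1) * σ! (l+1) m))) := by
  rw [ov_def, sigma_snoc h, sigmaInv_snoc h]
  simp only [mul_assoc]

-- commutation of distant generators with sigma pieces
lemma comm_s_sigA {i m : ℕ} : Commute (s i) (σ (i+1) m) :=
  comm_sigma fun j hj _ => comm_ss (Or.inl (by omega))
lemma comm_s_sigA' {i m : ℕ} : Commute (s i) (σ! (i+1) m) :=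
  comm_sigmaInv fun j hj _ => comm_ss (Or.inl (by omega))
lemma comm_t_sigA {i m : ℕ} : Commute (t i) (σ (i+1) m) :=
  comm_sigma fun j hj _ => comm_ts (Or.inl (by omega))
lemma comm_t_sigA' {i m : ℕ} : Commute (t i) (σ! (i+1) m) :=
  comm_sigmaInv fun j hj _ => comm_ts (Or.inl (by omega))
lemma comm_s1_sigB {l i : ℕ} (h : l < i) : Commute (s (i+1)) (σ l i) :=
  comm_sigma fun j _ hj => comm_ss (Or.inr (by omega))
lemma comm_s1_sigB' {l i : ℕ} (h : l < i) : Commute (s (i+1)) (σ! l i) :=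
  comm_sigmaInv fun j _ hj => comm_ss (Or.inr (by omega))
lemma comm_t1_sigB {l i : ℕ} (h : l < i) : Commute (t (i+1)) (σ l i) :=
  comm_sigma fun j _ hj => comm_ts (Or.inr (by omega))
lemma comm_t1_sigB' {l i : ℕ} (h : l < i) : Commute (t (i+1)) (σ! l i) :=
  comm_sigmaInv fun j _ hj => comm_ts (Or.inr (by omega))

-- splitting of sigma around a straddled index i (l < i, i+1 < m)
lemma sigma_straddle {l i m : ℕ} (h1 : l < i) (h2 : i + 1 < m) :
    σ l m = σ (i+1) m * (s (i+1) * (s i * σ l i)) := by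
  have e1 : σ l m = σ (i+1) m * σ l (i+2) := by
    have := sigma_split (n := n) (N := N) (k := l) (j := i+2) (l := m) (by omega) (by omega)
    simpa using this
  rw [e1, show i+2 = (i+1)+1 from rfl, sigma_cons (by omega), sigma_cons (by omega)]

lemma sigmaInv_straddle {l i m : ℕ} (h1 : l < i) (h2 : i + 1 < m) :
    σ! l m = σ! l i * (s i * (s (i+1) * σ! (i+1) m)) := by
  have e1 : σ! l m = σ! l (i+2) * σ! (i+1) m := by
    have := sigmaInv_split (n := n) (N := N) (k := l) (j := i+2) (l := m) (by omega) (by omega)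
    simpa using this
  rw [e1, show i+2 = (i+1)+1 from rfl, sigmaInv_cons (by omega), sigmaInv_cons (by omega)]
  simp only [mul_assoc]

-- SIG lemmas: moving s i / t i across straddling sigma
lemma SIG1 {l i m : ℕ} (h1 : l < i) (h2 : i + 1 < m) (hi : 1 ≤ i ∧ i + 1 ≤ n - 1) :
    s i * σ l m = σ l m * s (i+1) := by
  rw [sigma_straddle h1 h2]
  calc s i * (σ (i+1) m * (s (i+1) * (s i * σ l i)))
      = σ (i+1) m * (s i * (s (i+1) * (s i * σ l i))) := by
        rw [comm_s_sigA.left_comm]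
    _ = σ (i+1) m * (s (i+1) * (s i * (s (i+1) * σ l i))) := by
        rw [ctx33 (braid' hi)]
    _ = σ (i+1) m * (s (i+1) * (s i * (σ l i * s (i+1)))) := by
        rw [(comm_s1_sigB h1).eq]
    _ = σ (i+1) m * (s (i+1) * (s i * σ l i)) * s (i+1) := by
        simp only [mul_assoc]

lemma SIG2 {l i m : ℕ} (h1 : l < i) (h2 : i + 1 < m) (hi : 1 ≤ i ∧ i + 1 ≤ n - 1) :
    s (i+1) * σ! l m = σ! l m * s i := by
  rw [sigmaInv_straddle h1 h2]
  calc s (i+1) * (σ! l i * (s i * (s (i+1) * σ! (i+1) m)))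
      = σ! l i * (s (i+1) * (s i * (s (i+1) * σ! (i+1) m))) := by
        rw [(comm_s1_sigB' h1).left_comm]
    _ = σ! l i * (s i * (s (i+1) * (s i * σ! (i+1) m))) := by
        rw [ctx33 (braid' hi).symm]
    _ = σ! l i * (s i * (s (i+1) * (σ! (i+1) m * s i))) := by
        rw [comm_s_sigA'.eq]
    _ = σ! l i * (s i * (s (i+1) * σ! (i+1) m)) * s i := by
        simp only [mul_assoc]

lemma SIG3 {l i m : ℕ} (h1 : l < i) (h2 : i + 1 < m) (hi : 1 ≤ i ∧ i + 1 ≤ n - 1) :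
    t i * σ l m = σ l m * t (i+1) := by
  rw [sigma_straddle h1 h2]
  calc t i * (σ (i+1) m * (s (i+1) * (s i * σ l i)))
      = σ (i+1) m * (t i * (s (i+1) * (s i * σ l i))) := by
        rw [comm_t_sigA.left_comm]
    _ = σ (i+1) m * (s (i+1) * (s i * (t (i+1) * σ l i))) := by
        rw [ctx33 (P1 hi)]
    _ = σ (i+1) m * (s (i+1) * (s i * (σ l i * t (i+1)))) := by
        rw [(comm_t1_sigB h1).eq]
    _ = σ (i+1) m * (s (i+1) * (s i * σ l i)) * t (i+1) := by
        simp only [mul_assoc]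

lemma SIG4 {l i m : ℕ} (h1 : l < i) (h2 : i + 1 < m) (hi : 1 ≤ i ∧ i + 1 ≤ n - 1) :
    t (i+1) * σ! l m = σ! l m * t i := by
  rw [sigmaInv_straddle h1 h2]
  calc t (i+1) * (σ! l i * (s i * (s (i+1) * σ! (i+1) m)))
      = σ! l i * (t (i+1) * (s i * (s (i+1) * σ! (i+1) m))) := by
        rw [(comm_t1_sigB' h1).left_comm]
    _ = σ! l i * (s i * (s (i+1) * (t i * σ! (i+1) m))) := by
        rw [ctx33 (P2 hi).symm]
    _ = σ! l i * (s i * (s (i+1) * (σ! (i+1) m * t i))) := by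
        rw [comm_t_sigA'.eq]
    _ = σ! l i * (s i * (s (i+1) * σ! (i+1) m)) * t i := by
        simp only [mul_assoc]

end BrauerProof

namespace BrauerProof
variable {n : ℕ} {N : ℂ}
local notation "𝔅" => BrauerAlgebra n N
local notation "s" => sB n N
local notation "t" => tB n N
local notation "σ" => sigmaB n N
local notation "σ!" => sigmaBInv n N
local notation "τ" => transpB n N
local notation "ω" => ovB n N

section strad

lemma commT_strad_s {l i m : ℕ} (h1 : l < i) (h2 : i + 1 < m) (hi : 1 ≤ i ∧ i + 1 ≤ n - 1) : s i * τ l m = τ l m * s i := by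
  rw [transp_def]
  calc s i * (σ l m * (s l * σ! l m))
      = σ l m * (s (i+1) * (s l * σ! l m)) := by
        rw [← mul_assoc, SIG1 h1 h2 hi, mul_assoc]
    _ = σ l m * (s l * (s (i+1) * σ! l m)) := by
        rw [(comm_ss (k := i+1) (l := l) (Or.inr (by omega))).left_comm (σ! l m)]
    _ = σ l m * (s l * (σ! l m * s i)) := by rw [SIG2 h1 h2 hi]
    _ = σ l m * (s l * σ! l m) * s i := by simp only [mul_assoc]

lemma commT_strad_t {l i m : ℕ} (h1 : l < i) (h2 : i + 1 < m) (hi : 1 ≤ i ∧ i + 1 ≤ n - 1) : t i * τ l m = τ l m * t i := by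
  rw [transp_def]
  calc t i * (σ l m * (s l * σ! l m))
      = σ l m * (t (i+1) * (s l * σ! l m)) := by
        rw [← mul_assoc, SIG3 h1 h2 hi, mul_assoc]
    _ = σ l m * (s l * (t (i+1) * σ! l m)) := by
        rw [(comm_ts (k := i+1) (l := l) (Or.inr (by omega))).left_comm (σ! l m)]
    _ = σ l m * (s l * (σ! l m * t i)) := by rw [SIG4 h1 h2 hi]
    _ = σ l m * (s l * σ! l m) * t i := by simp only [mul_assoc]

lemma commO_strad_s {l i m : ℕ} (h1 : l < i) (h2 : i + 1 < m) (hi : 1 ≤ i ∧ i + 1 ≤ n - 1) : s i * ω l m = ω l m * s i := by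
  rw [ov_def]
  calc s i * (σ l m * (t l * σ! l m))
      = σ l m * (s (i+1) * (t l * σ! l m)) := by
        rw [← mul_assoc, SIG1 h1 h2 hi, mul_assoc]
    _ = σ l m * (t l * (s (i+1) * σ! l m)) := by
        rw [(comm_st (k := i+1) (l := l) (Or.inr (by omega))).left_comm (σ! l m)]
    _ = σ l m * (t l * (σ! l m * s i)) := by rw [SIG2 h1 h2 hi]
    _ = σ l m * (t l * σ! l m) * s i := by simp only [mul_assoc]

lemma commO_strad_t {l i m : ℕ} (h1 : l < i) (h2 : i + 1 < m) (hi : 1 ≤ i ∧ i + 1 ≤ n - 1) : t i * ω l m = ω l m * t i := by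
  rw [ov_def]
  calc t i * (σ l m * (t l * σ! l m))
      = σ l m * (t (i+1) * (t l * σ! l m)) := by
        rw [← mul_assoc, SIG3 h1 h2 hi, mul_assoc]
    _ = σ l m * (t l * (t (i+1) * σ! l m)) := by
        rw [(comm_tt (k := i+1) (l := l) (Or.inr (by omega))).left_comm (σ! l m)]
    _ = σ l m * (t l * (σ! l m * t i)) := by rw [SIG4 h1 h2 hi]
    _ = σ l m * (t l * σ! l m) * t i := by simp only [mul_assoc]

end strad

section high

lemma commT_high_s {l i m : ℕ} (h1 : i + 1 < l) : Commute (s i) (τ l m) := by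
  rw [transp_def]
  exact (comm_sigma fun j hj _ => comm_ss (Or.inl (by omega))).mul_right
    ((comm_ss (Or.inl (by omega))).mul_right
      (comm_sigmaInv fun j hj _ => comm_ss (Or.inl (by omega))))

lemma commT_high_t {l i m : ℕ} (h1 : i + 1 < l) : Commute (t i) (τ l m) := by
  rw [transp_def]
  exact (comm_sigma fun j hj _ => comm_ts (Or.inl (by omega))).mul_right
    ((comm_ts (Or.inl (by omega))).mul_right
      (comm_sigmaInv fun j hj _ => comm_ts (Or.inl (by omega))))

lemma commO_high_s {l i m : ℕ} (h1 : i + 1 < l) : Commute (s i) (ω l m) := by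
  rw [ov_def]
  exact (comm_sigma fun j hj _ => comm_ss (Or.inl (by omega))).mul_right
    ((comm_st (Or.inl (by omega))).mul_right
      (comm_sigmaInv fun j hj _ => comm_ss (Or.inl (by omega))))

lemma commO_high_t {l i m : ℕ} (h1 : i + 1 < l) : Commute (t i) (ω l m) := by
  rw [ov_def]
  exact (comm_sigma fun j hj _ => comm_ts (Or.inl (by omega))).mul_right
    ((comm_tt (Or.inl (by omega))).mul_right
      (comm_sigmaInv fun j hj _ => comm_ts (Or.inl (by omega))))

end high

section adjacent

lemma S1 {i m : ℕ} (h2 : i + 1 < m) (hi : 1 ≤ i ∧ i + 1 ≤ n - 1) : s i * τ i m = τ (i+1) m * s i := by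
  rw [transp_decomp h2, transp_def]
  calc s i * (σ (i+1) m * (s (i+1) * (s i * (s (i+1) * σ! (i+1) m))))
      = σ (i+1) m * (s i * (s (i+1) * (s i * (s (i+1) * σ! (i+1) m)))) := by
        rw [comm_s_sigA.left_comm]
    _ = σ (i+1) m * (s (i+1) * (s i * (s (i+1) * (s (i+1) * σ! (i+1) m)))) := by
        rw [ctx33 (braid' hi)]
    _ = σ (i+1) m * (s (i+1) * (s i * σ! (i+1) m)) := by
        rw [ctx21 (ss (hhi hi)), one_mul]
    _ = σ (i+1) m * (s (i+1) * (σ! (i+1) m * s i)) := by rw [comm_s_sigA'.eq]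
    _ = σ (i+1) m * (s (i+1) * σ! (i+1) m) * s i := by simp only [mul_assoc]

lemma S2 {i m : ℕ} (h2 : i + 1 < m) (hi : 1 ≤ i ∧ i + 1 ≤ n - 1) : τ i m * s i = s i * τ (i+1) m := by
  rw [transp_decomp h2, transp_def]
  calc σ (i+1) m * (s (i+1) * (s i * (s (i+1) * σ! (i+1) m))) * s i
      = σ (i+1) m * (s (i+1) * (s i * (s (i+1) * (σ! (i+1) m * s i)))) := by
        simp only [mul_assoc]
    _ = σ (i+1) m * (s (i+1) * (s i * (s (i+1) * (s i * σ! (i+1) m)))) := by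
        rw [← comm_s_sigA'.eq]
    _ = σ (i+1) m * (s i * (s (i+1) * (s i * (s i * σ! (i+1) m)))) := by
        rw [← ctx33 (braid' hi)]
    _ = σ (i+1) m * (s i * (s (i+1) * σ! (i+1) m)) := by
        rw [ctx21 (ss (hlo hi)), one_mul]
    _ = s i * (σ (i+1) m * (s (i+1) * σ! (i+1) m)) := by rw [← comm_s_sigA.left_comm]

lemma S3 {i m : ℕ} (h2 : i + 1 < m) (hi : 1 ≤ i ∧ i + 1 ≤ n - 1) : s i * ω i m = ω (i+1) m * s i := by
  rw [ov_decomp h2, ov_def]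
  calc s i * (σ (i+1) m * (s (i+1) * (t i * (s (i+1) * σ! (i+1) m))))
      = σ (i+1) m * (s i * (s (i+1) * (t i * (s (i+1) * σ! (i+1) m)))) := by
        rw [comm_s_sigA.left_comm]
    _ = σ (i+1) m * (t (i+1) * (s i * (s (i+1) * (s (i+1) * σ! (i+1) m)))) := by
        rw [ctx33 (P2 hi)]
    _ = σ (i+1) m * (t (i+1) * (s i * σ! (i+1) m)) := by
        rw [ctx21 (ss (hhi hi)), one_mul]
    _ = σ (i+1) m * (t (i+1) * (σ! (i+1) m * s i)) := by rw [comm_s_sigA'.eq]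
    _ = σ (i+1) m * (t (i+1) * σ! (i+1) m) * s i := by simp only [mul_assoc]

lemma S4 {i m : ℕ} (h2 : i + 1 < m) (hi : 1 ≤ i ∧ i + 1 ≤ n - 1) : ω i m * s i = s i * ω (i+1) m := by
  rw [ov_decomp h2, ov_def]
  calc σ (i+1) m * (s (i+1) * (t i * (s (i+1) * σ! (i+1) m))) * s i
      = σ (i+1) m * (s (i+1) * (t i * (s (i+1) * (σ! (i+1) m * s i)))) := by
        simp only [mul_assoc]
    _ = σ (i+1) m * (s (i+1) * (t i * (s (i+1) * (s i * σ! (i+1) m)))) := by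
        rw [← comm_s_sigA'.eq]
    _ = σ (i+1) m * (s i * (t (i+1) * (s i * (s i * σ! (i+1) m)))) := by
        rw [← ctx33 (E5 hi)]
    _ = σ (i+1) m * (s i * (t (i+1) * σ! (i+1) m)) := by
        rw [ctx21 (ss (hlo hi)), one_mul]
    _ = s i * (σ (i+1) m * (t (i+1) * σ! (i+1) m)) := by rw [← comm_s_sigA.left_comm]

lemma T1 {i m : ℕ} (h2 : i + 1 < m) (hi : 1 ≤ i ∧ i + 1 ≤ n - 1) : t i * τ i m = t i * ω (i+1) m := by
  rw [transp_decomp h2, ov_def]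
  calc t i * (σ (i+1) m * (s (i+1) * (s i * (s (i+1) * σ! (i+1) m))))
      = σ (i+1) m * (t i * (s (i+1) * (s i * (s (i+1) * σ! (i+1) m)))) := by
        rw [comm_t_sigA.left_comm]
    _ = σ (i+1) m * (t i * (t (i+1) * (s (i+1) * σ! (i+1) m))) := by
        rw [ctx32 (E1 hi)]
    _ = σ (i+1) m * (t i * (t (i+1) * σ! (i+1) m)) := by
        rw [ctx21 (ts (hhi hi))]
    _ = t i * (σ (i+1) m * (t (i+1) * σ! (i+1) m)) := by rw [← comm_t_sigA.left_comm]

lemma T2 {i m : ℕ} (h2 : i + 1 < m) (hi : 1 ≤ i ∧ i + 1 ≤ n - 1) : t i * ω i m = t i * τ (i+1) m := by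
  rw [ov_decomp h2, transp_def]
  calc t i * (σ (i+1) m * (s (i+1) * (t i * (s (i+1) * σ! (i+1) m))))
      = σ (i+1) m * (t i * (s (i+1) * (t i * (s (i+1) * σ! (i+1) m)))) := by
        rw [comm_t_sigA.left_comm]
    _ = σ (i+1) m * (t i * (s (i+1) * σ! (i+1) m)) := by
        rw [ctx31 (E6a hi)]
    _ = t i * (σ (i+1) m * (s (i+1) * σ! (i+1) m)) := by rw [← comm_t_sigA.left_comm]

lemma T3 {i m : ℕ} (h2 : i + 1 < m) (hi : 1 ≤ i ∧ i + 1 ≤ n - 1) : τ i m * t i = ω (i+1) m * t i := by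
  rw [transp_decomp h2, ov_def]
  calc σ (i+1) m * (s (i+1) * (s i * (s (i+1) * σ! (i+1) m))) * t i
      = σ (i+1) m * (s (i+1) * (s i * (s (i+1) * (t i * σ! (i+1) m)))) := by
        simp only [mul_assoc]
        rw [← comm_t_sigA'.eq]
    _ = σ (i+1) m * (s (i+1) * (t (i+1) * (t i * σ! (i+1) m))) := by
        rw [ctx32 (E3 hi)]
    _ = σ (i+1) m * (t (i+1) * (t i * σ! (i+1) m)) := by
        rw [ctx21 (st (hhi hi))]
    _ = σ (i+1) m * (t (i+1) * (σ! (i+1) m * t i)) := by rw [comm_t_sigA'.eq]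
    _ = σ (i+1) m * (t (i+1) * σ! (i+1) m) * t i := by simp only [mul_assoc]

lemma T4 {i m : ℕ} (h2 : i + 1 < m) (hi : 1 ≤ i ∧ i + 1 ≤ n - 1) : ω i m * t i = τ (i+1) m * t i := by
  rw [ov_decomp h2, transp_def]
  calc σ (i+1) m * (s (i+1) * (t i * (s (i+1) * σ! (i+1) m))) * t i
      = σ (i+1) m * (s (i+1) * (t i * (s (i+1) * (t i * σ! (i+1) m)))) := by
        simp only [mul_assoc]
        rw [← comm_t_sigA'.eq]
    _ = σ (i+1) m * (s (i+1) * (t i * σ! (i+1) m)) := by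
        rw [ctx31 (E6a hi)]
    _ = σ (i+1) m * (s (i+1) * (σ! (i+1) m * t i)) := by rw [comm_t_sigA'.eq]
    _ = σ (i+1) m * (s (i+1) * σ! (i+1) m) * t i := by simp only [mul_assoc]

end adjacent
end BrauerProof

namespace BrauerProof
variable {n : ℕ} {N : ℂ}
local notation "𝔅" => BrauerAlgebra n N
local notation "s" => sB n N
local notation "t" => tB n N
local notation "σ" => sigmaB n N
local notation "σ!" => sigmaBInv n N
local notation "τ" => transpB n N
local notation "ω" => ovB n N
local notation "X" => xB n N

lemma transp_bot {l k : ℕ} (h : l + 1 < k) (hb : 1 ≤ l ∧ l + 1 ≤ n - 1) :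
    τ l k = s l * (τ (l+1) k * s l) := by
  symm
  rw [transp_decomp h, transp_def]
  calc s l * (σ (l+1) k * (s (l+1) * σ! (l+1) k) * s l)
      = σ (l+1) k * (s l * (s (l+1) * (σ! (l+1) k * s l))) := by
        simp only [mul_assoc]
        rw [(comm_s_sigA (i := l)).left_comm]
    _ = σ (l+1) k * (s l * (s (l+1) * (s l * σ! (l+1) k))) := by
        rw [← (comm_s_sigA' (i := l)).eq]
    _ = σ (l+1) k * (s (l+1) * (s l * (s (l+1) * σ! (l+1) k))) := by
        rw [ctx33 (braid' hb)]

lemma ov_bot {l k : ℕ} (h : l + 1 < k) (hb : 1 ≤ l ∧ l + 1 ≤ n - 1) :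
    ω l k = s l * (ω (l+1) k * s l) := by
  symm
  rw [ov_decomp h, ov_def]
  calc s l * (σ (l+1) k * (t (l+1) * σ! (l+1) k) * s l)
      = σ (l+1) k * (s l * (t (l+1) * (σ! (l+1) k * s l))) := by
        simp only [mul_assoc]
        rw [(comm_s_sigA (i := l)).left_comm]
    _ = σ (l+1) k * (s l * (t (l+1) * (s l * σ! (l+1) k))) := by
        rw [← (comm_s_sigA' (i := l)).eq]
    _ = σ (l+1) k * (s (l+1) * (t l * (s (l+1) * σ! (l+1) k))) := by
        rw [ctx33 (E5 hb)]

-- the x recursion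
lemma x_succ {k : ℕ} (hk : 1 ≤ k ∧ k ≤ n - 1) :
    X (k+1) = s k * X k * s k + s k - t k := by
  obtain ⟨j, rfl⟩ : ∃ j, k = j + 1 := ⟨k - 1, by omega⟩
  unfold xB
  rw [show j + 1 + 1 - 1 = j + 1 from rfl, show j + 1 - 1 = j from rfl,
    Finset.sum_range_succ, transp_adj, ov_adj]
  have hC : s (j+1) * algebraMap ℂ 𝔅 ((N-1)/2) * s (j+1) = algebraMap ℂ 𝔅 ((N-1)/2) := by
    rw [← Algebra.commutes ((N-1)/2) (s (j+1)), mul_assoc, ss hk, mul_one]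
  have hsum : s (j+1) * (∑ l ∈ Finset.range j, (τ (l+1) (j+1) - ω (l+1) (j+1))) * s (j+1)
      = ∑ l ∈ Finset.range j, (τ (l+1) (j+1+1) - ω (l+1) (j+1+1)) := by
    rw [Finset.mul_sum, Finset.sum_mul]
    refine Finset.sum_congr rfl fun l hl => ?_
    rw [Finset.mem_range] at hl
    rw [mul_sub, sub_mul, transp_top (l := l+1) (k := j+1) (by omega),
      ov_top (l := l+1) (k := j+1) (by omega), mul_assoc, mul_assoc]
  rw [mul_add, add_mul, hC, hsum]
  abel

lemma sx1 {k : ℕ} (hk : 1 ≤ k ∧ k ≤ n - 1) :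
    s k * X (k+1) = X k * s k + 1 - t k := by
  rw [x_succ hk, mul_sub, mul_add]
  rw [show s k * (s k * X k * s k) = (s k * s k) * (X k * s k) by simp only [mul_assoc]]
  rw [ss hk, one_mul, st hk]

lemma xs1 {k : ℕ} (hk : 1 ≤ k ∧ k ≤ n - 1) :
    X (k+1) * s k = s k * X k + 1 - t k := by
  rw [x_succ hk, sub_mul, add_mul]
  rw [show s k * X k * s k * s k = s k * X k * (s k * s k) by simp only [mul_assoc]]
  rw [ss hk, mul_one, ts hk]

-- C1 identities, with trailing-context formulation
lemma C1a {k : ℕ} (hk : k ≤ n - 1) :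
    ∀ d l, 1 ≤ l → l < k → k - l - 1 = d →
      ∀ x : 𝔅, t k * (τ l k * x) = t k * (ω l k * (s k * x)) := by
  intro d
  induction d with
  | zero =>
    intro l hl hlk hd x
    have hk2 : k = l + 1 := by omega
    subst hk2
    rw [transp_adj, ov_adj]
    exact ctx23 ((tts' ⟨hl, hk⟩).symm)
  | succ d ih =>
    intro l hl hlk hd x
    have h1 : l + 1 < k := by omega
    have hb : 1 ≤ l ∧ l + 1 ≤ n - 1 := ⟨hl, by omega⟩
    have hdist : Commute (t k) (s l) := comm_ts (Or.inr (by omega))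
    have hds : Commute (s k) (s l) := comm_ss (Or.inr (by omega))
    calc t k * (τ l k * x)
        = t k * (s l * (τ (l+1) k * (s l * x))) := by
          rw [transp_bot h1 hb]; simp only [mul_assoc]
      _ = s l * (t k * (τ (l+1) k * (s l * x))) := by rw [hdist.left_comm]
      _ = s l * (t k * (ω (l+1) k * (s k * (s l * x)))) := by
          rw [ih (l+1) (by omega) (by omega) (by omega) (s l * x)]
      _ = s l * (t k * (ω (l+1) k * (s l * (s k * x)))) := by rw [hds.left_comm x]
      _ = t k * (s l * (ω (l+1) k * (s l * (s k * x)))) := by rw [← hdist.left_comm]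
      _ = t k * (ω l k * (s k * x)) := by
          rw [ov_bot h1 hb]; simp only [mul_assoc]

lemma C1b {k : ℕ} (hk : k ≤ n - 1) :
    ∀ d l, 1 ≤ l → l < k → k - l - 1 = d →
      ∀ x : 𝔅, τ l k * (t k * x) = s k * (ω l k * (t k * x)) := by
  intro d
  induction d with
  | zero =>
    intro l hl hlk hd x
    have hk2 : k = l + 1 := by omega
    subst hk2
    rw [transp_adj, ov_adj]
    exact ctx23 (F1 ⟨hl, hk⟩)
  | succ d ih =>
    intro l hl hlk hd x
    have h1 : l + 1 < k := by omega
    have hb : 1 ≤ l ∧ l + 1 ≤ n - 1 := ⟨hl, by omega⟩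
    have hdist : Commute (s l) (t k) := comm_st (Or.inl (by omega))
    have hds : Commute (s l) (s k) := comm_ss (Or.inl (by omega))
    calc τ l k * (t k * x)
        = s l * (τ (l+1) k * (s l * (t k * x))) := by
          rw [transp_bot h1 hb]; simp only [mul_assoc]
      _ = s l * (τ (l+1) k * (t k * (s l * x))) := by rw [hdist.left_comm x]
      _ = s l * (s k * (ω (l+1) k * (t k * (s l * x)))) := by
          rw [ih (l+1) (by omega) (by omega) (by omega) (s l * x)]
      _ = s k * (s l * (ω (l+1) k * (t k * (s l * x)))) := by rw [hds.left_comm]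
      _ = s k * (s l * (ω (l+1) k * (s l * (t k * x)))) := by rw [← hdist.left_comm x]
      _ = s k * (ω l k * (t k * x)) := by
          rw [ov_bot h1 hb]; simp only [mul_assoc]

-- t_k annihilates x_k + x_{k+1}
lemma tx_zero {k : ℕ} (hk : 1 ≤ k ∧ k ≤ n - 1) : t k * (X k + X (k+1)) = 0 := by
  have key : ∀ l, 1 ≤ l → l < k → (t k * (τ l k - ω l k)) * (1 + s k) = 0 := by
    intro l hl hlk
    have ha : t k * τ l k = t k * ω l k * s k := by
      have := C1a (n := n) (N := N) hk.2 (k - l - 1) l hl hlk rfl 1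
      simpa [mul_assoc] using this
    have e : t k * ω l k * s k * s k = t k * ω l k := by
      rw [show t k * ω l k * s k * s k = t k * ω l k * (s k * s k) by
        simp only [mul_assoc], ss hk, mul_one]
    rw [mul_sub, ha, mul_add, mul_one, sub_mul, e]
    abel
  have hxk : (t k * X k) * (1 + s k) = (N - 1) • t k := by
    have ed : t k * X k = ((N-1)/2) • t k
        + ∑ l ∈ Finset.range (k-1), t k * (τ (l+1) k - ω (l+1) k) := by
      unfold xB
      rw [mul_add (t k), Finset.mul_sum]
      congr 1
      rw [← Algebra.commutes ((N-1)/2) (t k), ← Algebra.smul_def]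
    have expand : (t k * X k) * (1 + s k)
        = ((N-1)/2) • (t k * (1 + s k))
          + ∑ l ∈ Finset.range (k-1), (t k * (τ (l+1) k - ω (l+1) k)) * (1 + s k) := by
      rw [ed, add_mul, Finset.sum_mul, smul_mul_assoc]
    have h1 : ∑ l ∈ Finset.range (k-1), (t k * (τ (l+1) k - ω (l+1) k)) * (1 + s k) = 0 := by
      refine Finset.sum_eq_zero fun l hl => ?_
      rw [Finset.mem_range] at hl
      exact key (l+1) (by omega) (by omega)
    rw [expand, h1, add_zero, mul_add, mul_one, ts hk]
    module
  rw [x_succ hk]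
  have e1 : t k * (X k + (s k * X k * s k + s k - t k))
      = (t k * X k) * (1 + s k) + t k - N • t k := by
    rw [mul_add, mul_sub, mul_add, mul_add, mul_one]
    rw [show t k * (s k * X k * s k) = (t k * s k) * (X k * s k) by simp only [mul_assoc]]
    rw [ts hk, tt hk, ← mul_assoc]
    abel
  rw [e1, hxk]
  module

lemma xt_zero {k : ℕ} (hk : 1 ≤ k ∧ k ≤ n - 1) : (X k + X (k+1)) * t k = 0 := by
  have key : ∀ l, 1 ≤ l → l < k → (1 + s k) * ((τ l k - ω l k) * t k) = 0 := by
    intro l hl hlk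
    have ha : τ l k * t k = s k * (ω l k * t k) := by
      have := C1b (n := n) (N := N) hk.2 (k - l - 1) l hl hlk rfl 1
      simpa [mul_assoc] using this
    have e : s k * (s k * (ω l k * t k)) = ω l k * t k := by
      rw [show s k * (s k * (ω l k * t k)) = (s k * s k) * (ω l k * t k) by
        simp only [mul_assoc], ss hk, one_mul]
    rw [sub_mul, ha, add_mul, one_mul, mul_sub, e]
    abel
  have hxk : (1 + s k) * (X k * t k) = (N - 1) • t k := by
    have ed : X k * t k = ((N-1)/2) • t k
        + ∑ l ∈ Finset.range (k-1), (τ (l+1) k - ω (l+1) k) * t k := by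
      unfold xB
      rw [add_mul, Finset.sum_mul]
      congr 1
    have expand : (1 + s k) * (X k * t k)
        = ((N-1)/2) • ((1 + s k) * t k)
          + ∑ l ∈ Finset.range (k-1), (1 + s k) * ((τ (l+1) k - ω (l+1) k) * t k) := by
      rw [ed, mul_add, Finset.mul_sum, mul_smul_comm]
    have h1 : ∑ l ∈ Finset.range (k-1), (1 + s k) * ((τ (l+1) k - ω (l+1) k) * t k) = 0 := by
      refine Finset.sum_eq_zero fun l hl => ?_
      rw [Finset.mem_range] at hl
      exact key (l+1) (by omega) (by omega)
    rw [expand, h1, add_zero, add_mul, one_mul, st hk]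
    module
  rw [x_succ hk]
  have e1 : (X k + (s k * X k * s k + s k - t k)) * t k
      = (1 + s k) * (X k * t k) + t k - N • t k := by
    have h2 : s k * X k * s k * t k = s k * (X k * t k) := by
      rw [show s k * X k * s k * t k = s k * (X k * (s k * t k)) by simp only [mul_assoc],
        st hk]
    rw [add_mul, sub_mul, add_mul, h2, tt hk, st hk, add_mul, one_mul]
    abel
  rw [e1, hxk]
  module

end BrauerProof

namespace BrauerProof
variable {n : ℕ} {N : ℂ}
local notation "𝔅" => BrauerAlgebra n N
local notation "s" => sB n N
local notation "t" => tB n N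
local notation "σ" => sigmaB n N
local notation "σ!" => sigmaBInv n N
local notation "τ" => transpB n N
local notation "ω" => ovB n N
local notation "X" => xB n N

lemma comm_x {m : ℕ} {a : 𝔅}
    (H : ∀ j, 1 ≤ j → j < m → Commute a (s j) ∧ Commute a (t j)) :
    Commute a (X m) := by
  unfold xB
  refine Commute.add_right ?_ (Commute.sum_right _ _ _ fun l hl => ?_)
  · exact Commute.symm (Algebra.commutes ((N-1)/2) a)
  · rw [Finset.mem_range] at hl
    have hsig : Commute a (σ (l+1) m) :=
      comm_sigma fun j hj hj2 => (H j (by omega) (by omega)).1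
    have hsig' : Commute a (σ! (l+1) m) :=
      comm_sigmaInv fun j hj hj2 => (H j (by omega) (by omega)).1
    refine Commute.sub_right ?_ ?_
    · rw [transp_def]
      exact hsig.mul_right (((H (l+1) (by omega) (by omega)).1).mul_right hsig')
    · rw [ov_def]
      exact hsig.mul_right (((H (l+1) (by omega) (by omega)).2).mul_right hsig')

lemma FH_s {i m : ℕ} (hi : 1 ≤ i ∧ i + 1 ≤ n - 1) (hm : i + 1 < m) :
    Commute (s i) (X m) := by
  have hGpair :
      (s i * (τ (i+1) m - ω (i+1) m) - (τ (i+1) m - ω (i+1) m) * s i)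
      + (s i * (τ (i-1+1) m - ω (i-1+1) m) - (τ (i-1+1) m - ω (i-1+1) m) * s i) = 0 := by
    rw [show i - 1 + 1 = i by omega, mul_sub, mul_sub, sub_mul, sub_mul,
      S1 hm hi, S2 hm hi, S3 hm hi, S4 hm hi]
    abel
  have key : ∀ l ∈ ((Finset.range (m-1)).erase i).erase (i-1),
      s i * (τ (l+1) m - ω (l+1) m) - (τ (l+1) m - ω (l+1) m) * s i = 0 := by
    intro l hl
    simp only [Finset.mem_erase, Finset.mem_range] at hl
    obtain ⟨hne1, hne2, hlm⟩ := hl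
    by_cases hc : l + 1 < i
    · rw [mul_sub, sub_mul, commT_strad_s hc hm hi, commO_strad_s hc hm hi]
      abel
    · have hgt : i + 1 < l + 1 := by omega
      rw [mul_sub, sub_mul, (commT_high_s hgt).eq, (commO_high_s hgt).eq]
      abel
  have main : ∑ l ∈ Finset.range (m-1),
      (s i * (τ (l+1) m - ω (l+1) m) - (τ (l+1) m - ω (l+1) m) * s i) = 0 := by
    rw [← Finset.add_sum_erase _ _ (show i ∈ Finset.range (m-1) by
      rw [Finset.mem_range]; omega)]
    rw [← Finset.add_sum_erase _ _ (show i-1 ∈ (Finset.range (m-1)).erase i by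
      rw [Finset.mem_erase, Finset.mem_range]; constructor <;> omega)]
    rw [Finset.sum_eq_zero key, add_zero]
    exact hGpair
  show s i * X m = X m * s i
  unfold xB
  rw [mul_add, add_mul, ← Algebra.commutes ((N-1)/2) (s i)]
  congr 1
  rw [Finset.mul_sum, Finset.sum_mul]
  rw [Finset.sum_sub_distrib] at main
  exact sub_eq_zero.mp main

lemma FH_t {i m : ℕ} (hi : 1 ≤ i ∧ i + 1 ≤ n - 1) (hm : i + 1 < m) :
    Commute (t i) (X m) := by
  have hGpair :
      (t i * (τ (i+1) m - ω (i+1) m) - (τ (i+1) m - ω (i+1) m) * t i)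
      + (t i * (τ (i-1+1) m - ω (i-1+1) m) - (τ (i-1+1) m - ω (i-1+1) m) * t i) = 0 := by
    rw [show i - 1 + 1 = i by omega, mul_sub, mul_sub, sub_mul, sub_mul,
      T1 hm hi, T2 hm hi, T3 hm hi, T4 hm hi]
    abel
  have key : ∀ l ∈ ((Finset.range (m-1)).erase i).erase (i-1),
      t i * (τ (l+1) m - ω (l+1) m) - (τ (l+1) m - ω (l+1) m) * t i = 0 := by
    intro l hl
    simp only [Finset.mem_erase, Finset.mem_range] at hl
    obtain ⟨hne1, hne2, hlm⟩ := hl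
    by_cases hc : l + 1 < i
    · rw [mul_sub, sub_mul, commT_strad_t hc hm hi, commO_strad_t hc hm hi]
      abel
    · have hgt : i + 1 < l + 1 := by omega
      rw [mul_sub, sub_mul, (commT_high_t hgt).eq, (commO_high_t hgt).eq]
      abel
  have main : ∑ l ∈ Finset.range (m-1),
      (t i * (τ (l+1) m - ω (l+1) m) - (τ (l+1) m - ω (l+1) m) * t i) = 0 := by
    rw [← Finset.add_sum_erase _ _ (show i ∈ Finset.range (m-1) by
      rw [Finset.mem_range]; omega)]
    rw [← Finset.add_sum_erase _ _ (show i-1 ∈ (Finset.range (m-1)).erase i by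
      rw [Finset.mem_erase, Finset.mem_range]; constructor <;> omega)]
    rw [Finset.sum_eq_zero key, add_zero]
    exact hGpair
  show t i * X m = X m * t i
  unfold xB
  rw [mul_add, add_mul, ← Algebra.commutes ((N-1)/2) (t i)]
  congr 1
  rw [Finset.mul_sum, Finset.sum_mul]
  rw [Finset.sum_sub_distrib] at main
  exact sub_eq_zero.mp main

lemma comm_s_x_lo {i m : ℕ} (hm : m < i) : Commute (s i) (X m) :=
  comm_x fun j hj hjm => ⟨comm_ss (Or.inr (by omega)), comm_st (Or.inr (by omega))⟩

lemma comm_t_x_lo {i m : ℕ} (hm : m < i) : Commute (t i) (X m) :=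
  comm_x fun j hj hjm => ⟨comm_ts (Or.inr (by omega)), comm_tt (Or.inr (by omega))⟩

-- x_k commutes with x_{k+1}
lemma comm_xx {k : ℕ} (hk : 1 ≤ k ∧ k ≤ n - 1) : Commute (X k) (X (k+1)) := by
  refine (comm_x fun j hj hjm => ?_).symm
  exact ⟨(FH_s ⟨hj, by omega⟩ (by omega)).symm, (FH_t ⟨hj, by omega⟩ (by omega)).symm⟩

end BrauerProof

namespace BrauerProof
variable {n : ℕ} {N : ℂ}
local notation "𝔅" => BrauerAlgebra n N
local notation "s" => sB n N
local notation "t" => tB n N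
local notation "X" => xB n N

-- sign-twisted commutation of t_k with powers
lemma TPx {k : ℕ} (hk : 1 ≤ k ∧ k ≤ n - 1) :
    ∀ p, t k * X (k+1) ^ p = ((-1 : ℂ) ^ p) • (t k * X k ^ p) := by
  intro p
  induction p with
  | zero => simp
  | succ p ih =>
    have hB : (t k * X (k+1)) * X k ^ p + t k * X k ^ (p+1) = 0 := by
      have h0 := tx_zero (n := n) (N := N) hk
      rw [mul_add] at h0
      calc (t k * X (k+1)) * X k ^ p + t k * X k ^ (p+1)
          = (t k * X k + t k * X (k+1)) * X k ^ p := by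
            rw [add_mul, pow_succ', ← mul_assoc]
            abel
        _ = 0 := by rw [h0, zero_mul]
    calc t k * X (k+1) ^ (p+1)
        = (t k * X (k+1) ^ p) * X (k+1) := by rw [pow_succ, mul_assoc]
      _ = ((-1:ℂ)^p • (t k * X k ^ p)) * X (k+1) := by rw [ih]
      _ = (-1:ℂ)^p • (t k * (X k ^ p * X (k+1))) := by rw [smul_mul_assoc, mul_assoc]
      _ = (-1:ℂ)^p • (t k * (X (k+1) * X k ^ p)) := by
          rw [← ((comm_xx (n := n) (N := N) hk).symm.pow_right p).eq]
      _ = (-1:ℂ)^p • ((t k * X (k+1)) * X k ^ p) := by rw [mul_assoc]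
      _ = (-1:ℂ)^p • ((t k * X (k+1)) * X k ^ p + t k * X k ^ (p+1))
            - (-1:ℂ)^p • (t k * X k ^ (p+1)) := by module
      _ = (-1:ℂ)^(p+1) • (t k * X k ^ (p+1)) := by rw [hB]; module

lemma XPt {k : ℕ} (hk : 1 ≤ k ∧ k ≤ n - 1) :
    ∀ p, X (k+1) ^ p * t k = ((-1 : ℂ) ^ p) • (X k ^ p * t k) := by
  intro p
  induction p with
  | zero => simp
  | succ p ih =>
    have hB : X k ^ p * (X (k+1) * t k) + X k ^ (p+1) * t k = 0 := by
      have h0 := xt_zero (n := n) (N := N) hk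
      rw [add_mul] at h0
      calc X k ^ p * (X (k+1) * t k) + X k ^ (p+1) * t k
          = X k ^ p * (X k * t k + X (k+1) * t k) := by
            rw [mul_add, pow_succ, mul_assoc]
            abel
        _ = 0 := by rw [h0, mul_zero]
    calc X (k+1) ^ (p+1) * t k
        = X (k+1) * (X (k+1) ^ p * t k) := by rw [pow_succ', mul_assoc]
      _ = X (k+1) * ((-1:ℂ)^p • (X k ^ p * t k)) := by rw [ih]
      _ = (-1:ℂ)^p • ((X (k+1) * X k ^ p) * t k) := by rw [mul_smul_comm, mul_assoc]
      _ = (-1:ℂ)^p • ((X k ^ p * X (k+1)) * t k) := by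
          rw [((comm_xx (n := n) (N := N) hk).symm.pow_right p).eq]
      _ = (-1:ℂ)^p • (X k ^ p * (X (k+1) * t k)) := by rw [mul_assoc]
      _ = (-1:ℂ)^p • (X k ^ p * (X (k+1) * t k) + X k ^ (p+1) * t k)
            - (-1:ℂ)^p • (X k ^ (p+1) * t k) := by module
      _ = (-1:ℂ)^(p+1) • (X k ^ (p+1) * t k) := by rw [hB]; module

-- the Ia / Ib expansion identities
lemma Ia {k : ℕ} (hk : 1 ≤ k ∧ k ≤ n - 1) :
    ∀ p, s k * X k ^ p
      = X (k+1) ^ p * s k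
        + ∑ a ∈ Finset.range p, X (k+1) ^ a * (t k - 1) * X k ^ (p-1-a) := by
  have hsx : s k * X k = X (k+1) * s k + (t k - 1) := by rw [xs1 hk]; abel
  intro p
  induction p with
  | zero => simp
  | succ p ih =>
    rw [pow_succ, ← mul_assoc, ih, add_mul, Finset.sum_mul,
      mul_assoc (X (k+1) ^ p) (s k) (X k), hsx, mul_add (X (k+1) ^ p),
      ← mul_assoc (X (k+1) ^ p) (X (k+1)) (s k), ← pow_succ]
    have hs : ∑ a ∈ Finset.range p, (X (k+1) ^ a * (t k - 1) * X k ^ (p-1-a)) * X k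
        = ∑ a ∈ Finset.range p, X (k+1) ^ a * (t k - 1) * X k ^ (p+1-1-a) := by
      refine Finset.sum_congr rfl fun a ha => ?_
      rw [Finset.mem_range] at ha
      rw [mul_assoc, ← pow_succ, show p-1-a+1 = p+1-1-a by omega]
    rw [hs, Finset.sum_range_succ, show p+1-1-p = 0 by omega, pow_zero, mul_one]
    abel

lemma Ib {k : ℕ} (hk : 1 ≤ k ∧ k ≤ n - 1) :
    ∀ p, s k * X (k+1) ^ p
      = X k ^ p * s k
        - ∑ a ∈ Finset.range p, X k ^ a * (t k - 1) * X (k+1) ^ (p-1-a) := by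
  have hsB : s k * X (k+1) = X k * s k - (t k - 1) := by rw [sx1 hk]; abel
  intro p
  induction p with
  | zero => simp
  | succ p ih =>
    rw [pow_succ, ← mul_assoc, ih, sub_mul, Finset.sum_mul,
      mul_assoc (X k ^ p) (s k) (X (k+1)), hsB, mul_sub (X k ^ p),
      ← mul_assoc (X k ^ p) (X k) (s k), ← pow_succ]
    have hs : ∑ a ∈ Finset.range p, (X k ^ a * (t k - 1) * X (k+1) ^ (p-1-a)) * X (k+1)
        = ∑ a ∈ Finset.range p, X k ^ a * (t k - 1) * X (k+1) ^ (p+1-1-a) := by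
      refine Finset.sum_congr rfl fun a ha => ?_
      rw [Finset.mem_range] at ha
      rw [mul_assoc, ← pow_succ, show p-1-a+1 = p+1-1-a by omega]
    rw [hs, Finset.sum_range_succ, show p+1-1-p = 0 by omega, pow_zero, mul_one]
    abel

lemma keyS {k i : ℕ} (hk : 1 ≤ k ∧ k ≤ n - 1) (hi : Odd i) :
    s k * (X k ^ i + X (k+1) ^ i) = (X k ^ i + X (k+1) ^ i) * s k := by
  have hEi : Even (i - 1) := by obtain ⟨c, hc⟩ := hi; exact ⟨c, by omega⟩
  have e1 : ∀ a ∈ Finset.range i,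
      X (k+1) ^ a * (t k - 1) * X k ^ (i-1-a) - X k ^ a * (t k - 1) * X (k+1) ^ (i-1-a)
      = X k ^ a * X (k+1) ^ (i-1-a) - X (k+1) ^ a * X k ^ (i-1-a) := by
    intro a ha
    rw [Finset.mem_range] at ha
    have hsign : ((-1 : ℂ)) ^ a = (-1 : ℂ) ^ (i-1-a) := by
      have hab : Even (a + (i-1-a)) := by
        rwa [show a + (i-1-a) = i - 1 by omega]
      calc ((-1 : ℂ)) ^ a
          = (-1 : ℂ) ^ a * ((-1 : ℂ) ^ (i-1-a) * (-1 : ℂ) ^ (i-1-a)) := by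
            rw [← pow_add, Even.neg_one_pow ⟨i-1-a, rfl⟩, mul_one]
        _ = ((-1 : ℂ) ^ a * (-1 : ℂ) ^ (i-1-a)) * (-1 : ℂ) ^ (i-1-a) := by ring
        _ = (-1 : ℂ) ^ (i-1-a) := by rw [← pow_add, Even.neg_one_pow hab, one_mul]
    have hBt : X (k+1) ^ a * (t k) = ((-1 : ℂ) ^ a) • (X k ^ a * t k) := XPt hk a
    have htB : t k * X (k+1) ^ (i-1-a) = ((-1 : ℂ) ^ (i-1-a)) • (t k * X k ^ (i-1-a)) :=
      TPx hk (i-1-a)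
    rw [mul_sub, mul_sub, mul_one, mul_one, sub_mul, sub_mul, hBt, smul_mul_assoc,
      mul_assoc (X k ^ a) (t k) (X (k+1) ^ (i-1-a)), htB, mul_smul_comm, hsign,
      ← mul_assoc (X k ^ a) (t k) (X k ^ (i-1-a))]
    abel
  have e2 : ∑ a ∈ Finset.range i,
      (X k ^ a * X (k+1) ^ (i-1-a) - X (k+1) ^ a * X k ^ (i-1-a)) = 0 := by
    rw [Finset.sum_sub_distrib]
    have hrefl : ∑ a ∈ Finset.range i, X k ^ a * X (k+1) ^ (i-1-a)
        = ∑ a ∈ Finset.range i, X (k+1) ^ a * X k ^ (i-1-a) := by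
      calc ∑ a ∈ Finset.range i, X k ^ a * X (k+1) ^ (i-1-a)
          = ∑ a ∈ Finset.range i, X k ^ (i-1-a) * X (k+1) ^ (i-1-(i-1-a)) :=
            (Finset.sum_range_reflect (fun a => X k ^ a * X (k+1) ^ (i-1-a)) i).symm
        _ = ∑ a ∈ Finset.range i, X (k+1) ^ a * X k ^ (i-1-a) := by
            refine Finset.sum_congr rfl fun a ha => ?_
            rw [Finset.mem_range] at ha
            rw [show i-1-(i-1-a) = a by omega]
            exact ((comm_xx hk).pow_pow (i-1-a) a).eq
    rw [hrefl, sub_self]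
  have hsums : ∑ a ∈ Finset.range i, X (k+1) ^ a * (t k - 1) * X k ^ (i-1-a)
      = ∑ a ∈ Finset.range i, X k ^ a * (t k - 1) * X (k+1) ^ (i-1-a) := by
    have : ∑ a ∈ Finset.range i,
        (X (k+1) ^ a * (t k - 1) * X k ^ (i-1-a)
          - X k ^ a * (t k - 1) * X (k+1) ^ (i-1-a)) = 0 := by
      rw [Finset.sum_congr rfl e1]
      exact e2
    rw [Finset.sum_sub_distrib] at this
    exact sub_eq_zero.mp this
  rw [mul_add, add_mul, Ia hk i, Ib hk i, hsums]
  abel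

lemma keyT1 {k i : ℕ} (hk : 1 ≤ k ∧ k ≤ n - 1) (hi : Odd i) :
    t k * (X k ^ i + X (k+1) ^ i) = 0 := by
  rw [mul_add, TPx (n := n) (N := N) hk i, Odd.neg_one_pow hi]
  module

lemma keyT2 {k i : ℕ} (hk : 1 ≤ k ∧ k ≤ n - 1) (hi : Odd i) :
    (X k ^ i + X (k+1) ^ i) * t k = 0 := by
  rw [add_mul, XPt (n := n) (N := N) hk i, Odd.neg_one_pow hi]
  module

-- commutation of the generators with the full power sum
lemma genS {k i : ℕ} (hk : 1 ≤ k ∧ k ≤ n - 1) (hi : Odd i) :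
    Commute (s k) (∑ m ∈ Finset.range n, X (m+1) ^ i) := by
  have hGpair :
      (s k * X (k+1) ^ i - X (k+1) ^ i * s k)
      + (s k * X (k-1+1) ^ i - X (k-1+1) ^ i * s k) = 0 := by
    rw [show k - 1 + 1 = k by omega]
    have h := keyS (n := n) (N := N) (i := i) hk hi
    rw [mul_add, add_mul] at h
    have h2 := sub_eq_zero.mpr h
    calc (s k * X (k+1) ^ i - X (k+1) ^ i * s k)
          + (s k * X (k-0) ^ i - X (k-0) ^ i * s k)
        = (s k * X (k-0) ^ i + s k * X (k+1) ^ i)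
          - (X (k-0) ^ i * s k + X (k+1) ^ i * s k) := by abel
      _ = 0 := by rw [show k - 0 = k from rfl]; exact h2
  have key : ∀ m ∈ ((Finset.range n).erase k).erase (k-1),
      s k * X (m+1) ^ i - X (m+1) ^ i * s k = 0 := by
    intro m hm
    simp only [Finset.mem_erase, Finset.mem_range] at hm
    obtain ⟨hne1, hne2, hmn⟩ := hm
    by_cases hc : m + 1 < k
    · exact sub_eq_zero.mpr ((comm_s_x_lo hc).pow_right i).eq
    · have hgt : k + 1 < m + 1 := by omega
      have hk2 : 1 ≤ k ∧ k + 1 ≤ n - 1 := ⟨hk.1, by omega⟩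
      exact sub_eq_zero.mpr ((FH_s hk2 hgt).pow_right i).eq
  have main : ∑ m ∈ Finset.range n,
      (s k * X (m+1) ^ i - X (m+1) ^ i * s k) = 0 := by
    rw [← Finset.add_sum_erase _ _ (show k ∈ Finset.range n by
      rw [Finset.mem_range]; omega)]
    rw [← Finset.add_sum_erase _ _ (show k-1 ∈ (Finset.range n).erase k by
      rw [Finset.mem_erase, Finset.mem_range]; constructor <;> omega)]
    rw [Finset.sum_eq_zero key, add_zero]
    exact hGpair
  rw [Finset.sum_sub_distrib, ← Finset.mul_sum, ← Finset.sum_mul] at main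
  exact sub_eq_zero.mp main

lemma genT {k i : ℕ} (hk : 1 ≤ k ∧ k ≤ n - 1) (hi : Odd i) :
    Commute (t k) (∑ m ∈ Finset.range n, X (m+1) ^ i) := by
  have hGpair :
      (t k * X (k+1) ^ i - X (k+1) ^ i * t k)
      + (t k * X (k-1+1) ^ i - X (k-1+1) ^ i * t k) = 0 := by
    rw [show k - 1 + 1 = k by omega]
    have h1 := keyT1 (n := n) (N := N) (i := i) hk hi
    have h2 := keyT2 (n := n) (N := N) (i := i) hk hi
    rw [mul_add] at h1
    rw [add_mul] at h2
    calc (t k * X (k+1) ^ i - X (k+1) ^ i * t k)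
          + (t k * X (k-0) ^ i - X (k-0) ^ i * t k)
        = (t k * X (k-0) ^ i + t k * X (k+1) ^ i)
          - (X (k-0) ^ i * t k + X (k+1) ^ i * t k) := by abel
      _ = 0 := by rw [show k - 0 = k from rfl, h1, h2, sub_zero]
  have key : ∀ m ∈ ((Finset.range n).erase k).erase (k-1),
      t k * X (m+1) ^ i - X (m+1) ^ i * t k = 0 := by
    intro m hm
    simp only [Finset.mem_erase, Finset.mem_range] at hm
    obtain ⟨hne1, hne2, hmn⟩ := hm
    by_cases hc : m + 1 < k
    · exact sub_eq_zero.mpr ((comm_t_x_lo hc).pow_right i).eq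
    · have hgt : k + 1 < m + 1 := by omega
      have hk2 : 1 ≤ k ∧ k + 1 ≤ n - 1 := ⟨hk.1, by omega⟩
      exact sub_eq_zero.mpr ((FH_t hk2 hgt).pow_right i).eq
  have main : ∑ m ∈ Finset.range n,
      (t k * X (m+1) ^ i - X (m+1) ^ i * t k) = 0 := by
    rw [← Finset.add_sum_erase _ _ (show k ∈ Finset.range n by
      rw [Finset.mem_range]; omega)]
    rw [← Finset.add_sum_erase _ _ (show k-1 ∈ (Finset.range n).erase k by
      rw [Finset.mem_erase, Finset.mem_range]; constructor <;> omega)]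
    rw [Finset.sum_eq_zero key, add_zero]
    exact hGpair
  rw [Finset.sum_sub_distrib, ← Finset.mul_sum, ← Finset.sum_mul] at main
  exact sub_eq_zero.mp main

lemma gen_eq_s (j : Fin (n-1)) :
    RingQuot.mkAlgHom ℂ (BrauerRel n N) (FreeAlgebra.ι ℂ (Sum.inl j)) = s ((j : ℕ) + 1) := by
  unfold sB bS
  rw [dif_pos ⟨by omega, by omega⟩]
  congr 2

lemma gen_eq_t (j : Fin (n-1)) :
    RingQuot.mkAlgHom ℂ (BrauerRel n N) (FreeAlgebra.ι ℂ (Sum.inr j)) = t ((j : ℕ) + 1) := by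
  unfold tB bT
  rw [dif_pos ⟨by omega, by omega⟩]
  congr 2

end BrauerProof


/-- For every odd positive integer `i`, the element
`x₁^i + ⋯ + xₙ^i` is central in the Brauer algebra `B(n,N)`. -/
theorem jucysMurphy_odd_power_sum_central (n : ℕ) (N : ℂ) (i : ℕ) (hi : Odd i) :
    (∑ k ∈ Finset.range n, xB n N (k + 1) ^ i) ∈
      Subalgebra.center ℂ (BrauerAlgebra n N) := by
  rw [Subalgebra.mem_center_iff]
  intro b
  obtain ⟨y, rfl⟩ := RingQuot.mkAlgHom_surjective ℂ (BrauerRel n N) b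
  set P : BrauerAlgebra n N := ∑ k ∈ Finset.range n, xB n N (k + 1) ^ i with hP
  refine FreeAlgebra.induction ℂ (BIdx n)
    (motive := fun y => RingQuot.mkAlgHom ℂ (BrauerRel n N) y * P
      = P * RingQuot.mkAlgHom ℂ (BrauerRel n N) y) ?_ ?_ ?_ ?_ y
  · intro r
    rw [AlgHom.commutes]
    exact Algebra.commutes r P
  · intro x
    match x with
    | Sum.inl j =>
      rw [BrauerProof.gen_eq_s j]
      exact (BrauerProof.genS ⟨by omega, by omega⟩ hi).symm.eq.symm
    | Sum.inr j =>
      rw [BrauerProof.gen_eq_t j]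
      exact (BrauerProof.genT ⟨by omega, by omega⟩ hi).symm.eq.symm
  · intro a b ha hb
    rw [map_mul]
    exact (Commute.mul_left (ha : Commute _ P) (hb : Commute _ P)).eq
  · intro a b ha hb
    rw [map_add]
    exact (Commute.add_left (ha : Commute _ P) (hb : Commute _ P)).eq
end
end

section
/- Let μ be a Young diagram with m boxes, with addable-box contents c_1,…,c_{l+1}, removable-box contents d_1,…,d_l and box contents e_1,…,e_m. For any h ∈ ℂ (in the paper h = (N−1)/2) set b_1,…,b_{2l+1} := h+c_1,…,h+c_{l+1}, −h−d_1,…,−h−d_l and a_j := h+e_j for j = 1,…,m. Then the following identity of polynomials in the variable u over ℂ holds: ∏_{j=1}^{2l+1}(u + b_j) · (u − h) · ∏_{j=1}^{m} ((u − a_j)^2 − 1)(u + a_j)^2 = ∏_{j=1}^{2l+1}(u − b_j) · (u + h) · ∏_{j=1}^{m} ((u + a_j)^2 − 1)(u − a_j)^2. -/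
noncomputable section

open scoped BigOperators

/-- The content (as a complex number) of the box `c = (i,j)` of a Young
diagram (0-based row `i`, column `j`): `j − i`. -/
def contentC (c : ℕ × ℕ) : ℂ := (c.2 : ℂ) - (c.1 : ℂ)

/-- A box `c` is addable for the Young diagram `μ` if it is not in `μ` and
adjoining it to `μ` again yields a Young diagram. -/
def IsAddable (μ : YoungDiagram) (c : ℕ × ℕ) : Prop :=
  c ∉ μ ∧ IsLowerSet (↑(insert c μ.cells) : Set (ℕ × ℕ))

/-- A box `c` is removable for the Young diagram `μ` if it lies in `μ` and
deleting it from `μ` again yields a Young diagram. -/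
def IsRemovable (μ : YoungDiagram) (c : ℕ × ℕ) : Prop :=
  c ∈ μ ∧ IsLowerSet (↑(μ.cells.erase c) : Set (ℕ × ℕ))

namespace SchurAux

/-- Integer content of a box. -/
def cont (c : ℕ × ℕ) : ℤ := (c.2 : ℤ) - (c.1 : ℤ)

/-- First possible row index on diagonal `k`. -/
def i0 (k : ℤ) : ℕ := (-k).toNat

/-- The cell on diagonal `k` in row `i` (meaningful when `i0 k ≤ i`). -/
def cell (k : ℤ) (i : ℕ) : ℕ × ℕ := (i, ((i : ℤ) + k).toNat)

def diag (μ : YoungDiagram) (k : ℤ) : Finset (ℕ × ℕ) :=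
  μ.cells.filter (fun c => cont c = k)

def m (μ : YoungDiagram) (k : ℤ) : ℕ := (diag μ k).card

/-- One plus the row index of the last box on diagonal `k` (so `t μ k` is the
row of the unique addable-candidate position on diagonal `k`). -/
def t (μ : YoungDiagram) (k : ℤ) : ℕ := i0 k + m μ k

lemma row_ge_i0 {c : ℕ × ℕ} : i0 (cont c) ≤ c.1 := by
  simp only [i0, cont]; omega

lemma cont_cell {k : ℤ} {i : ℕ} (hi : i0 k ≤ i) : cont (cell k i) = k := by
  simp only [cont, cell, i0] at *; omega

lemma cell_eq {c : ℕ × ℕ} {k : ℤ} (hc : cont c = k) : c = cell k c.1 := by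
  simp only [cont] at hc
  simp only [cell]
  have : ((c.1 : ℤ) + k).toNat = c.2 := by omega
  rw [this]

lemma mem_diag {μ : YoungDiagram} {k : ℤ} {c : ℕ × ℕ} :
    c ∈ diag μ k ↔ c ∈ μ ∧ cont c = k := by
  simp [diag, YoungDiagram.mem_cells]

/-- KEY: diagonal membership is an initial interval. -/
theorem mem_cell_iff (μ : YoungDiagram) {k : ℤ} {i : ℕ} (hi : i0 k ≤ i) :
    cell k i ∈ μ ↔ i < t μ k := by
  classical
  set T : Finset ℕ := (diag μ k).image Prod.fst with hT
  have hmemT : ∀ j : ℕ, j ∈ T ↔ (i0 k ≤ j ∧ cell k j ∈ μ) := by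
    intro j
    simp only [hT, Finset.mem_image]
    constructor
    · rintro ⟨c, hc, rfl⟩
      rw [mem_diag] at hc
      exact ⟨hc.2 ▸ row_ge_i0, by rw [← cell_eq hc.2]; exact hc.1⟩
    · rintro ⟨hj, hcj⟩
      exact ⟨cell k j, mem_diag.mpr ⟨hcj, cont_cell hj⟩, rfl⟩
  have hcardT : T.card = m μ k := by
    rw [hT]
    apply Finset.card_image_of_injOn
    intro a ha b hb hab
    rw [Finset.mem_coe, mem_diag] at ha hb
    rw [cell_eq ha.2, cell_eq hb.2, hab]
  have hdc : ∀ a b : ℕ, i0 k ≤ a → a ≤ b → b ∈ T → a ∈ T := by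
    intro a b ha hab hb
    rw [hmemT] at hb ⊢
    exact ⟨ha, μ.up_left_mem hab (Int.toNat_le_toNat (by omega)) hb.2⟩
  have hlt : ∀ x ∈ T, x < t μ k := by
    intro x hx
    have hx0 : i0 k ≤ x := ((hmemT x).1 hx).1
    have hsub : Finset.Ico (i0 k) (x + 1) ⊆ T := by
      intro a ha
      rw [Finset.mem_Ico] at ha
      exact hdc a x ha.1 (by omega) hx
    have := Finset.card_le_card hsub
    rw [Nat.card_Ico, hcardT] at this
    simp only [t]; omega
  have hTeq : T = Finset.Ico (i0 k) (t μ k) := by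
    apply Finset.eq_of_subset_of_card_le
    · intro x hx
      rw [Finset.mem_Ico]
      exact ⟨((hmemT x).1 hx).1, hlt x hx⟩
    · rw [Nat.card_Ico, hcardT]; simp [t]
  constructor
  · intro hc
    have : i ∈ T := (hmemT i).2 ⟨hi, hc⟩
    rw [hTeq, Finset.mem_Ico] at this; exact this.2
  · intro hlt'
    have : i ∈ T := by rw [hTeq, Finset.mem_Ico]; exact ⟨hi, hlt'⟩
    exact ((hmemT i).1 this).2


lemma t_ge (μ : YoungDiagram) (k : ℤ) : i0 k ≤ t μ k := Nat.le_add_right _ _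

lemma i0_succ_le (k : ℤ) : i0 (k+1) ≤ i0 k := by simp only [i0]; omega

lemma t_mono (μ : YoungDiagram) (k : ℤ) : t μ (k+1) ≤ t μ k := by
  by_contra hcon
  push_neg at hcon
  have h1 : t μ k < t μ (k+1) := by omega
  set i := t μ (k+1) - 1 with hidef
  have hi1 : i0 (k+1) ≤ i := by
    have := t_ge μ k; have := i0_succ_le k; omega
  have hmem : cell (k+1) i ∈ μ := by
    rw [mem_cell_iff μ hi1]
    have := t_ge μ k; have := i0_succ_le k; omega
  have hik : i0 k ≤ i := by have := t_ge μ k; omega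
  have hmem2 : cell k i ∈ μ := by
    refine μ.up_left_mem (le_refl i) (Int.toNat_le_toNat (by omega)) hmem
  rw [mem_cell_iff μ hik] at hmem2
  have := t_ge μ k; omega

lemma t_step (μ : YoungDiagram) (k : ℤ) : t μ k ≤ t μ (k+1) + 1 := by
  by_contra hcon
  push_neg at hcon
  set i := t μ k - 1 with hidef
  have hik : i0 k ≤ i := by
    have := t_ge μ (k+1); have := i0_succ_le k
    simp only [i0] at *; omega
  have hmem : cell k i ∈ μ := by rw [mem_cell_iff μ hik]; omega
  have hi1 : 1 ≤ i := by have := t_ge μ (k+1); omega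
  have hmem2 : cell (k+1) (i-1) ∈ μ := by
    have hcol : ((i : ℤ) - 1 + (k+1)).toNat = ((i:ℤ) + k).toNat := by omega
    have : cell (k+1) (i-1) = (i - 1, ((i:ℤ) + k).toNat) := by
      simp only [cell]; rw [← hcol]; congr 1; omega
    rw [this]
    exact μ.up_left_mem (by omega) (le_refl _) hmem
  have hi1' : i0 (k+1) ≤ i - 1 := by have := t_ge μ (k+1); omega
  rw [mem_cell_iff μ hi1'] at hmem2
  omega



lemma isAddable_iff (μ : YoungDiagram) (i j : ℕ) :
    IsAddable μ (i, j) ↔ (i, j) ∉ μ ∧ (i = 0 ∨ (i - 1, j) ∈ μ) ∧ (j = 0 ∨ (i, j - 1) ∈ μ) := by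
  constructor
  · rintro ⟨hnot, hls⟩
    refine ⟨hnot, ?_, ?_⟩
    · rcases Nat.eq_zero_or_pos i with hi | hi
      · exact Or.inl hi
      · right
        have hle : (i - 1, j) ≤ (i, j) := by
          constructor <;> simp <;> omega
        have := hls hle (by simp)
        simp only [Finset.coe_insert, Set.mem_insert_iff] at this
        rcases this with heq | hmem
        · exfalso; have := congrArg Prod.fst heq; simp at this; omega
        · rwa [Finset.mem_coe, YoungDiagram.mem_cells] at hmem
    · rcases Nat.eq_zero_or_pos j with hj | hj
      · exact Or.inl hj
      · right
        have hle : (i, j - 1) ≤ (i, j) := by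
          constructor <;> simp <;> omega
        have := hls hle (by simp)
        simp only [Finset.coe_insert, Set.mem_insert_iff] at this
        rcases this with heq | hmem
        · exfalso; have := congrArg Prod.snd heq; simp at this; omega
        · rwa [Finset.mem_coe, YoungDiagram.mem_cells] at hmem
  · rintro ⟨hnot, hup, hleft⟩
    refine ⟨hnot, ?_⟩
    intro y x hxy hy
    simp only [Finset.coe_insert, Set.mem_insert_iff, Finset.mem_coe] at hy ⊢
    rcases hy with rfl | hy
    · -- y = (i,j)
      by_cases hx : x = (i, j)
      · exact Or.inl hx
      · right
        rw [YoungDiagram.mem_cells]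
        have hx1 : x.1 ≤ i := hxy.1
        have hx2 : x.2 ≤ j := hxy.2
        rcases Nat.lt_or_ge x.1 i with h1 | h1
        · rcases hup with rfl | hup
          · omega
          · have : x ≤ (i - 1, j) := ⟨by omega, by exact hx2⟩
            exact μ.isLowerSet this hup
        · have hx1' : x.1 = i := by omega
          have h2 : x.2 < j := by
            rcases Nat.lt_or_ge x.2 j with h2 | h2
            · exact h2
            · exfalso; apply hx; ext <;> omega
          rcases hleft with rfl | hleft
          · omega
          · have : x ≤ (i, j - 1) := ⟨by omega, by omega⟩
            exact μ.isLowerSet this hleft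
    · right
      exact Finset.mem_coe.mp (μ.isLowerSet hxy (Finset.mem_coe.mpr hy))

lemma isRemovable_iff (μ : YoungDiagram) (i j : ℕ) :
    IsRemovable μ (i, j) ↔ (i, j) ∈ μ ∧ (i + 1, j) ∉ μ ∧ (i, j + 1) ∉ μ := by
  constructor
  · rintro ⟨hmem, hls⟩
    refine ⟨hmem, ?_, ?_⟩
    · intro hcon
      have hin : (i + 1, j) ∈ (μ.cells.erase (i, j) : Set (ℕ × ℕ)) := by
        simp only [Finset.coe_erase, Set.mem_diff, Finset.mem_coe, ← YoungDiagram.mem_cells]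
        exact ⟨hcon, by simp⟩
      have := hls (show ((i:ℕ), j) ≤ (i + 1, j) by constructor <;> simp) hin
      simp at this
    · intro hcon
      have hin : (i, j + 1) ∈ (μ.cells.erase (i, j) : Set (ℕ × ℕ)) := by
        simp only [Finset.coe_erase, Set.mem_diff, Finset.mem_coe, ← YoungDiagram.mem_cells]
        exact ⟨hcon, by simp⟩
      have := hls (show ((i:ℕ), j) ≤ (i, j + 1) by constructor <;> simp) hin
      simp at this
  · rintro ⟨hmem, hr, hd⟩
    refine ⟨hmem, ?_⟩
    intro y x hxy hy
    simp only [Finset.coe_erase, Set.mem_diff, Finset.mem_coe, ← YoungDiagram.mem_cells,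
      Set.mem_singleton_iff] at hy ⊢
    obtain ⟨hy1, hy2⟩ := hy
    refine ⟨μ.isLowerSet hxy hy1, ?_⟩
    intro hxeq
    subst hxeq
    have hy1' : (y.1, y.2) ∈ μ := by rwa [Prod.mk.eta]
    have h1 : i ≤ y.1 := hxy.1
    have h2 : j ≤ y.2 := hxy.2
    have hne : y.1 = i ∧ y.2 = j → False := by
      intro ⟨a, b⟩; apply hy2; ext <;> simp [a, b]
    rcases Nat.lt_or_ge i y.1 with hc | hc
    · exact hr (μ.up_left_mem hc h2 hy1')
    · have hlt : j < y.2 := by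
        rcases Nat.lt_or_ge j y.2 with hlt | hlt
        · exact hlt
        · exfalso; exact hne ⟨by omega, by omega⟩
      exact hd (μ.up_left_mem h1 hlt hy1')

lemma mem_bounds {μ : YoungDiagram} {c : ℕ × ℕ} (h : c ∈ μ) : c.1 < t μ (cont c) := by
  have hc : c = cell (cont c) c.1 := cell_eq rfl
  rw [hc] at h
  exact (mem_cell_iff μ (row_ge_i0 (c := c))).1 h

lemma mem_bounds' {μ : YoungDiagram} {i j : ℕ} {k : ℤ} (hmem : (i, j) ∈ μ)
    (hc : (j : ℤ) - i = k) : i < t μ k := by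
  have h := mem_bounds hmem
  rwa [show cont (i, j) = k from hc] at h

lemma mem_cell' {μ : YoungDiagram} {i j : ℕ} {k : ℤ} (hc : (j : ℤ) - i = k)
    (hlt : i < t μ k) : (i, j) ∈ μ := by
  have h1 : i0 k ≤ i := by simp only [i0]; omega
  have h2 : (i, j) = cell k i := by simp only [cell, Prod.mk.injEq, true_and]; omega
  rw [h2]
  exact (mem_cell_iff μ h1).2 hlt

theorem isAddable_iff_cond (μ : YoungDiagram) (c : ℕ × ℕ) :
    IsAddable μ c ↔
      c.1 = t μ (cont c) ∧ t μ (cont c) = t μ (cont c + 1) ∧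
        t μ (cont c - 1) = t μ (cont c) + 1 := by
  obtain ⟨i, j⟩ := c
  set k := cont (i, j) with hkdef
  have hkk : (j : ℤ) - i = k := rfl
  clear_value k
  have hmono := t_mono μ k
  have hmono' : t μ k ≤ t μ (k - 1) := by have := t_mono μ (k - 1); simpa using this
  have hstep := t_step μ k
  have hstep' : t μ (k - 1) ≤ t μ k + 1 := by have := t_step μ (k - 1); simpa using this
  have htg : (-k).toNat ≤ t μ k := t_ge μ k
  have htg1 : (-(k + 1)).toNat ≤ t μ (k + 1) := t_ge μ (k + 1)
  have htg2 : (-(k - 1)).toNat ≤ t μ (k - 1) := t_ge μ (k - 1)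
  rw [isAddable_iff]
  constructor
  · rintro ⟨hnot, hup, hleft⟩
    have hge : t μ k ≤ i := by
      by_contra hcon
      push_neg at hcon
      exact hnot (mem_cell' hkk hcon)
    have heq : i = t μ k := by
      by_contra hcon
      have hie : 1 ≤ i := by omega
      rcases hup with h0 | hmem
      · omega
      · have hb : i - 1 < t μ (k + 1) := mem_bounds' hmem (by omega)
        omega
    have h2 : t μ k = t μ (k + 1) := by
      by_contra hcon
      have hie : 1 ≤ i := by omega
      rcases hup with h0 | hmem
      · omega
      · have hb : i - 1 < t μ (k + 1) := mem_bounds' hmem (by omega)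
        omega
    have h3 : t μ (k - 1) = t μ k + 1 := by
      by_contra hcon
      rcases hleft with h0 | hmem
      · omega
      · rcases Nat.eq_zero_or_pos j with hj0 | hj1
        · exact hnot (by simpa [hj0] using hmem)
        · have hb : i < t μ (k - 1) := mem_bounds' hmem (by omega)
          omega
    exact ⟨heq, h2, h3⟩
  · rintro ⟨h1, h2, h3⟩
    simp only at h1
    refine ⟨?_, ?_, ?_⟩
    · intro hmem
      have hb : i < t μ k := mem_bounds' hmem hkk
      omega
    · rcases Nat.eq_zero_or_pos i with h | h
      · exact Or.inl h
      · exact Or.inr (mem_cell' (k := k + 1) (by omega) (by omega))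
    · rcases Nat.eq_zero_or_pos j with h | h
      · exact Or.inl h
      · exact Or.inr (mem_cell' (k := k - 1) (by omega) (by omega))

theorem isRemovable_iff_cond (μ : YoungDiagram) (c : ℕ × ℕ) :
    IsRemovable μ c ↔
      c.1 + 1 = t μ (cont c) ∧ t μ (cont c) = t μ (cont c + 1) + 1 ∧
        t μ (cont c - 1) = t μ (cont c) := by
  obtain ⟨i, j⟩ := c
  set k := cont (i, j) with hkdef
  have hkk : (j : ℤ) - i = k := rfl
  clear_value k
  have hmono := t_mono μ k
  have hmono' : t μ k ≤ t μ (k - 1) := by have := t_mono μ (k - 1); simpa using this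
  have hstep := t_step μ k
  have hstep' : t μ (k - 1) ≤ t μ k + 1 := by have := t_step μ (k - 1); simpa using this
  have htg : (-k).toNat ≤ t μ k := t_ge μ k
  have htg1 : (-(k + 1)).toNat ≤ t μ (k + 1) := t_ge μ (k + 1)
  have htg2 : (-(k - 1)).toNat ≤ t μ (k - 1) := t_ge μ (k - 1)
  rw [isRemovable_iff]
  constructor
  · rintro ⟨hmem, hr, hd⟩
    have hb : i < t μ k := mem_bounds' hmem hkk
    have h1 : i + 1 = t μ k := by
      by_contra hcon
      have hmem2 : ((i + 1 : ℕ), (j + 1 : ℕ)) ∈ μ := mem_cell' (k := k) (by omega) (by omega)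
      exact hr (μ.up_left_mem (le_refl _) (by omega) hmem2)
    have h2 : t μ k = t μ (k + 1) + 1 := by
      by_contra hcon
      exact hd (mem_cell' (k := k + 1) (by omega) (by omega))
    have h3 : t μ (k - 1) = t μ k := by
      by_contra hcon
      exact hr (mem_cell' (k := k - 1) (by omega) (by omega))
    exact ⟨h1, h2, h3⟩
  · rintro ⟨h1, h2, h3⟩
    simp only at h1
    refine ⟨mem_cell' hkk (by omega), ?_, ?_⟩
    · intro hmem
      have hb : i + 1 < t μ (k - 1) := mem_bounds' hmem (by omega)
      omega
    · intro hmem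
      have hb : i < t μ (k + 1) := mem_bounds' hmem (by omega)
      omega

lemma filter_cont_A (μ : YoungDiagram) {A : Finset (ℕ × ℕ)}
    (hA : ∀ c, c ∈ A ↔ IsAddable μ c) (k : ℤ) :
    A.filter (fun c => cont c = k) =
      if t μ k = t μ (k + 1) ∧ t μ (k - 1) = t μ k + 1 then {cell k (t μ k)} else ∅ := by
  ext c
  simp only [Finset.mem_filter, hA, isAddable_iff_cond]
  split_ifs with hcond
  · simp only [Finset.mem_singleton]
    constructor
    · rintro ⟨⟨h1, h2, h3⟩, hck⟩
      rw [hck] at h1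
      rw [cell_eq hck, h1]
    · rintro rfl
      have hck : cont (cell k (t μ k)) = k := cont_cell (t_ge μ k)
      rw [hck]
      exact ⟨⟨rfl, hcond.1, hcond.2⟩, rfl⟩
  · simp only [Finset.notMem_empty, iff_false, not_and]
    rintro ⟨h1, h2, h3⟩ hck
    rw [hck] at h2 h3
    exact hcond ⟨h2, h3⟩

lemma filter_cont_R (μ : YoungDiagram) {R : Finset (ℕ × ℕ)}
    (hR : ∀ c, c ∈ R ↔ IsRemovable μ c) (k : ℤ) :
    R.filter (fun c => cont c = k) =
      if t μ k = t μ (k + 1) + 1 ∧ t μ (k - 1) = t μ k then {cell k (t μ k - 1)} else ∅ := by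
  have htg : (-k).toNat ≤ t μ k := t_ge μ k
  have htg1 : (-(k + 1)).toNat ≤ t μ (k + 1) := t_ge μ (k + 1)
  have htg2 : (-(k - 1)).toNat ≤ t μ (k - 1) := t_ge μ (k - 1)
  have hi0 : i0 k = (-k).toNat := rfl
  ext c
  simp only [Finset.mem_filter, hR, isRemovable_iff_cond]
  split_ifs with hcond
  · have hpos : (-k).toNat + 1 ≤ t μ k := by omega
    simp only [Finset.mem_singleton]
    constructor
    · rintro ⟨⟨h1, h2, h3⟩, hck⟩
      rw [hck] at h1
      rw [cell_eq hck]
      congr 1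
      omega
    · rintro rfl
      have hck : cont (cell k (t μ k - 1)) = k := cont_cell (by omega)
      rw [hck]
      refine ⟨⟨?_, hcond.1, hcond.2⟩, rfl⟩
      simp only [cell]
      omega
  · simp only [Finset.notMem_empty, iff_false, not_and]
    rintro ⟨h1, h2, h3⟩ hck
    rw [hck] at h2 h3
    exact hcond ⟨h2, h3⟩

lemma count_map_finset (s : Finset (ℕ × ℕ)) (f : (ℕ × ℕ) → ℤ) (k : ℤ) :
    Multiset.count k (Multiset.map f s.val) = (s.filter (fun c => f c = k)).card := by
  classical
  rw [Multiset.count_map]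
  simp only [Finset.card, Finset.filter_val]
  congr 1
  exact Multiset.filter_congr (fun x _ => eq_comm)

theorem multiset_key (μ : YoungDiagram) (A R : Finset (ℕ × ℕ))
    (hA : ∀ c, c ∈ A ↔ IsAddable μ c) (hR : ∀ c, c ∈ R ↔ IsRemovable μ c) :
    Multiset.map cont A.val + (Multiset.map cont μ.cells.val + Multiset.map cont μ.cells.val)
      = (0 ::ₘ Multiset.map cont R.val) +
        (Multiset.map (fun c => cont c + 1) μ.cells.val
          + Multiset.map (fun c => cont c - 1) μ.cells.val) := by
  classical
  ext k
  have htg : (-k).toNat ≤ t μ k := t_ge μ k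
  have htg1 : (-(k + 1)).toNat ≤ t μ (k + 1) := t_ge μ (k + 1)
  have htg2 : (-(k - 1)).toNat ≤ t μ (k - 1) := t_ge μ (k - 1)
  have hmono := t_mono μ k
  have hmono' : t μ k ≤ t μ (k - 1) := by have := t_mono μ (k - 1); simpa using this
  have hstep := t_step μ k
  have hstep' : t μ (k - 1) ≤ t μ k + 1 := by have := t_step μ (k - 1); simpa using this
  have hcA : Multiset.count k (Multiset.map cont A.val)
      = if t μ k = t μ (k + 1) ∧ t μ (k - 1) = t μ k + 1 then 1 else 0 := by
    rw [count_map_finset, filter_cont_A μ hA k]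
    split_ifs <;> simp
  have hcR : Multiset.count k (Multiset.map cont R.val)
      = if t μ k = t μ (k + 1) + 1 ∧ t μ (k - 1) = t μ k then 1 else 0 := by
    rw [count_map_finset, filter_cont_R μ hR k]
    split_ifs <;> simp
  have hcM : Multiset.count k (Multiset.map cont μ.cells.val) = m μ k := by
    rw [count_map_finset]; rfl
  have hcM1 : Multiset.count k (Multiset.map (fun c => cont c + 1) μ.cells.val) = m μ (k - 1) := by
    rw [count_map_finset]
    have : μ.cells.filter (fun c => cont c + 1 = k) = diag μ (k - 1) := by
      apply Finset.filter_congr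
      intro c _
      omega
    rw [this]; rfl
  have hcM2 : Multiset.count k (Multiset.map (fun c => cont c - 1) μ.cells.val) = m μ (k + 1) := by
    rw [count_map_finset]
    have : μ.cells.filter (fun c => cont c - 1 = k) = diag μ (k + 1) := by
      apply Finset.filter_congr
      intro c _
      omega
    rw [this]; rfl
  simp only [Multiset.count_add, Multiset.count_cons, hcA, hcR, hcM, hcM1, hcM2]
  have ht0 : t μ k = (-k).toNat + m μ k := rfl
  have ht1 : t μ (k + 1) = (-(k + 1)).toNat + m μ (k + 1) := rfl
  have ht2 : t μ (k - 1) = (-(k - 1)).toNat + m μ (k - 1) := rfl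
  split_ifs <;> omega

open Polynomial in
lemma finset_prod_eq (s : Finset (ℕ × ℕ)) (g : ℤ → Polynomial ℂ) (gg : (ℕ × ℕ) → ℤ) :
    ∏ c ∈ s, g (gg c) = (Multiset.map g (Multiset.map gg s.val)).prod := by
  rw [Multiset.map_map]
  rfl

open Polynomial in
lemma prod_eq (μ : YoungDiagram) (A R : Finset (ℕ × ℕ))
    (hA : ∀ c, c ∈ A ↔ IsAddable μ c) (hR : ∀ c, c ∈ R ↔ IsRemovable μ c)
    (f : ℤ → Polynomial ℂ) :
    (∏ c ∈ A, f (cont c)) * ((∏ c ∈ μ.cells, f (cont c)) * (∏ c ∈ μ.cells, f (cont c)))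
      = (f 0 * ∏ c ∈ R, f (cont c)) *
        ((∏ c ∈ μ.cells, f (cont c + 1)) * (∏ c ∈ μ.cells, f (cont c - 1))) := by
  have key := congrArg (fun s : Multiset ℤ => (Multiset.map f s).prod) (multiset_key μ A R hA hR)
  simp only [Multiset.map_add, Multiset.map_cons, Multiset.prod_add, Multiset.prod_cons] at key
  rw [finset_prod_eq A f cont, finset_prod_eq R f cont, finset_prod_eq μ.cells f cont,
    finset_prod_eq μ.cells f (fun c => cont c + 1), finset_prod_eq μ.cells f (fun c => cont c - 1)]
  exact key

end SchurAux

open SchurAux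

open Polynomial in
/-- With `b₁,…,b_{2l+1}` the numbers `h+c` (`c` an addable
content) and `−h−d` (`d` a removable content), and `a_j = h+e_j` over the
boxes of `μ`, the rational-function identity of Lemma 3.8 holds, written as a
polynomial identity:
`∏ⱼ(u+bⱼ) · (u−h) · ∏ⱼ((u−aⱼ)²−1)(u+aⱼ)²
  = ∏ⱼ(u−bⱼ) · (u+h) · ∏ⱼ((u+aⱼ)²−1)(u−aⱼ)²`. -/
theorem schur_q_generating_identity (μ : YoungDiagram) (A R : Finset (ℕ × ℕ))
    (hA : ∀ c, c ∈ A ↔ IsAddable μ c) (hR : ∀ c, c ∈ R ↔ IsRemovable μ c)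
    (h : ℂ) :
    (∏ c ∈ A, (X + C (h + contentC c))) * (∏ c ∈ R, (X - C (h + contentC c)))
        * (X - C h)
        * ∏ c ∈ μ.cells,
            (((X - C (h + contentC c)) ^ 2 - 1) * (X + C (h + contentC c)) ^ 2)
      = (∏ c ∈ A, (X - C (h + contentC c))) * (∏ c ∈ R, (X + C (h + contentC c)))
        * (X + C h)
        * ∏ c ∈ μ.cells,
            (((X + C (h + contentC c)) ^ 2 - 1) * (X - C (h + contentC c)) ^ 2) := by
  classical
  have hcast : ∀ c : ℕ × ℕ, contentC c = ((cont c : ℤ) : ℂ) := by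
    intro c
    simp [contentC, cont]
  have e1 := prod_eq μ A R hA hR (fun z => X + C (h + (z : ℂ)))
  have e2 := prod_eq μ A R hA hR (fun z => X - C (h + (z : ℂ)))
  simp only [Int.cast_zero, add_zero] at e1 e2
  simp only [hcast]
  have hsplitL : ∏ c ∈ μ.cells,
      (((X - C (h + ((cont c : ℤ) : ℂ))) ^ 2 - 1) * (X + C (h + ((cont c : ℤ) : ℂ))) ^ 2)
      = ((∏ c ∈ μ.cells, (X - C (h + ((cont c + 1 : ℤ) : ℂ))))
          * (∏ c ∈ μ.cells, (X - C (h + ((cont c - 1 : ℤ) : ℂ)))))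
        * ((∏ c ∈ μ.cells, (X + C (h + ((cont c : ℤ) : ℂ))))
          * (∏ c ∈ μ.cells, (X + C (h + ((cont c : ℤ) : ℂ))))) := by
    rw [← Finset.prod_mul_distrib, ← Finset.prod_mul_distrib, ← Finset.prod_mul_distrib]
    apply Finset.prod_congr rfl
    intro c _
    push_cast
    simp only [map_add, map_sub, map_one]
    ring
  have hsplitR : ∏ c ∈ μ.cells,
      (((X + C (h + ((cont c : ℤ) : ℂ))) ^ 2 - 1) * (X - C (h + ((cont c : ℤ) : ℂ))) ^ 2)
      = ((∏ c ∈ μ.cells, (X + C (h + ((cont c + 1 : ℤ) : ℂ))))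
          * (∏ c ∈ μ.cells, (X + C (h + ((cont c - 1 : ℤ) : ℂ)))))
        * ((∏ c ∈ μ.cells, (X - C (h + ((cont c : ℤ) : ℂ))))
          * (∏ c ∈ μ.cells, (X - C (h + ((cont c : ℤ) : ℂ))))) := by
    rw [← Finset.prod_mul_distrib, ← Finset.prod_mul_distrib, ← Finset.prod_mul_distrib]
    apply Finset.prod_congr rfl
    intro c _
    push_cast
    simp only [map_add, map_sub, map_one]
    ring
  rw [hsplitL, hsplitR]
  linear_combination
    ((∏ c ∈ A, (X - C (h + ((cont c : ℤ) : ℂ))))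
      * ((∏ c ∈ μ.cells, (X - C (h + ((cont c : ℤ) : ℂ))))
        * (∏ c ∈ μ.cells, (X - C (h + ((cont c : ℤ) : ℂ)))))) * e1
    - ((∏ c ∈ A, (X + C (h + ((cont c : ℤ) : ℂ))))
      * ((∏ c ∈ μ.cells, (X + C (h + ((cont c : ℤ) : ℂ))))
        * (∏ c ∈ μ.cells, (X + C (h + ((cont c : ℤ) : ℂ)))))) * e2
end
end

section
/- Let μ be a Young diagram with m boxes, with addable-box contents c_1,…,c_{l+1}, removable-box contents d_1,…,d_l and box contents e_1,…,e_m. Then for every h ∈ ℂ and every integer i ≥ 0: Σ_{j=1}^{l+1}(h+c_j)^i − Σ_{j=1}^{l}(h+d_j)^i = h^i + Σ_{j=1}^{m} ((h+e_j+1)^i − 2(h+e_j)^i + (h+e_j−1)^i). -/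
noncomputable section

open scoped BigOperators

lemma isAddable_iff (μ : YoungDiagram) (k j : ℕ) :
    IsAddable μ (k, j) ↔ j = μ.rowLen k ∧ (k = 0 ∨ μ.rowLen k < μ.rowLen (k-1)) := by
  constructor
  · rintro ⟨hnot, hlow⟩
    rw [YoungDiagram.mem_iff_lt_rowLen, not_lt] at hnot
    have h1 : j = μ.rowLen k := by
      refine le_antisymm ?_ hnot
      by_contra hlt
      push_neg at hlt
      have : ((k, μ.rowLen k) : ℕ × ℕ) ∈ (↑(insert (k, j) μ.cells) : Set (ℕ × ℕ)) := by
        refine hlow (Prod.mk_le_mk.2 ⟨le_refl k, le_of_lt hlt⟩) ?_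
        simp
      simp only [Finset.coe_insert, Set.mem_insert_iff, Finset.mem_coe,
        YoungDiagram.mem_cells] at this
      rcases this with h | h
      · exact absurd (Prod.mk.injEq .. ▸ h) (by simp [Nat.ne_of_lt hlt, hlt.ne])
      · rw [YoungDiagram.mem_iff_lt_rowLen] at h; omega
    refine ⟨h1, ?_⟩
    rcases Nat.eq_zero_or_pos k with hk | hk
    · exact Or.inl hk
    · right
      have : ((k-1, j) : ℕ × ℕ) ∈ (↑(insert (k, j) μ.cells) : Set (ℕ × ℕ)) := by
        refine hlow (Prod.mk_le_mk.2 ⟨Nat.sub_le k 1, le_refl j⟩) ?_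
        simp
      simp only [Finset.coe_insert, Set.mem_insert_iff, Finset.mem_coe,
        YoungDiagram.mem_cells] at this
      rcases this with h | h
      · exfalso; have := congrArg Prod.fst h; simp at this; omega
      · rw [YoungDiagram.mem_iff_lt_rowLen] at h; omega
  · rintro ⟨rfl, hcond⟩
    constructor
    · rw [YoungDiagram.mem_iff_lt_rowLen]; omega
    · rintro ⟨a, b⟩ ⟨x, y⟩ ⟨hx, hy⟩ hab
      simp only [Finset.coe_insert, Set.mem_insert_iff, Finset.mem_coe,
        YoungDiagram.mem_cells] at hab ⊢
      simp only [Prod.mk.injEq] at hab ⊢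
      rcases hab with ⟨hak, hbj⟩ | hab
      · -- (a,b) = (k, rowLen k), (x,y) ≤ it
        rcases Nat.lt_or_ge x k with hxk | hxk
        · right
          rw [YoungDiagram.mem_iff_lt_rowLen]
          rcases hcond with hc | hc
          · omega
          · have h2 : μ.rowLen (k-1) ≤ μ.rowLen x := μ.rowLen_anti x (k-1) (by omega)
            omega
        · have hxe : x = k := by omega
          rcases Nat.lt_or_ge y (μ.rowLen k) with hy2 | hy2
          · right; rw [YoungDiagram.mem_iff_lt_rowLen, hxe]; exact hy2
          · left; exact ⟨hxe, by omega⟩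
      · right
        rw [YoungDiagram.mem_iff_lt_rowLen] at hab ⊢
        have := μ.rowLen_anti x a hx
        omega

lemma isRemovable_iff (μ : YoungDiagram) (k j : ℕ) :
    IsRemovable μ (k, j) ↔ j + 1 = μ.rowLen k ∧ μ.rowLen (k+1) ≤ j := by
  constructor
  · rintro ⟨hmem, hlow⟩
    rw [YoungDiagram.mem_iff_lt_rowLen] at hmem
    have key : ∀ a b : ℕ, k ≤ a → j ≤ b → (a, b) ∈ μ → (a, b) = (k, j) := by
      intro a b ha hb hab
      by_contra hne
      have : ((k, j) : ℕ × ℕ) ∈ (↑(μ.cells.erase (k, j)) : Set (ℕ × ℕ)) := by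
        refine hlow (Prod.mk_le_mk.2 ⟨ha, hb⟩) ?_
        simp only [Finset.coe_erase, Set.mem_diff, Finset.mem_coe,
          YoungDiagram.mem_cells, Set.mem_singleton_iff]
        exact ⟨hab, hne⟩
      simp at this
    constructor
    · by_contra hne
      have h2 : j + 1 < μ.rowLen k := by omega
      have := key k (j+1) le_rfl (by omega) (YoungDiagram.mem_iff_lt_rowLen.2 h2)
      simp at this
    · by_contra hne
      push_neg at hne
      have := key (k+1) j (by omega) le_rfl (YoungDiagram.mem_iff_lt_rowLen.2 hne)
      simp at this
  · rintro ⟨h1, h2⟩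
    constructor
    · rw [YoungDiagram.mem_iff_lt_rowLen]; omega
    · rintro ⟨a, b⟩ ⟨x, y⟩ ⟨hx, hy⟩ hab
      simp only [Finset.coe_erase, Set.mem_diff, Finset.mem_coe,
        YoungDiagram.mem_cells, Set.mem_singleton_iff] at hab ⊢
      obtain ⟨hab, hne⟩ := hab
      refine ⟨μ.isLowerSet (Prod.mk_le_mk.2 ⟨hx, hy⟩) hab, ?_⟩
      intro heq
      obtain ⟨hxk, hyj⟩ : x = k ∧ y = j := Prod.mk.injEq .. ▸ heq
      rw [YoungDiagram.mem_iff_lt_rowLen] at hab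
      simp only [Prod.mk.injEq, not_and] at hne
      have hak : k ≤ a := by omega
      rcases Nat.eq_or_lt_of_le hak with heq2 | hlt
      · have : μ.rowLen a = j + 1 := by rw [← heq2]; omega
        have : b = j := by omega
        exact hne (by omega) this
      · have := μ.rowLen_anti (k+1) a hlt
        omega

lemma key_tel (g : ℤ → ℂ) (r : ℕ → ℕ) (hr : ∀ k, r (k+1) ≤ r k) (n : ℕ) :
    (∑ k ∈ Finset.range (n+1), if k = 0 ∨ r k < r (k-1) then g ((r k : ℤ) - k) else 0)
      - ∑ k ∈ Finset.range n, (if r (k+1) < r k then g ((r k : ℤ) - 1 - k) else 0)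
    = ∑ k ∈ Finset.range (n+1), (g ((r k : ℤ) - k) - g ((r k : ℤ) - 1 - k))
        + g ((r n : ℤ) - 1 - n) := by
  induction n with
  | zero => simp
  | succ n ih =>
    rw [Finset.sum_range_succ (f := fun k => if k = 0 ∨ r k < r (k-1) then g ((r k : ℤ) - k) else 0),
      Finset.sum_range_succ (f := fun k => if r (k+1) < r k then g ((r k : ℤ) - 1 - k) else 0),
      Finset.sum_range_succ (f := fun k => g ((r k : ℤ) - k) - g ((r k : ℤ) - 1 - k))]
    rcases lt_or_eq_of_le (hr n) with hlt | heq
    · rw [if_pos (Or.inr (by simpa using hlt)), if_pos hlt]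
      linear_combination ih
    · rw [if_neg (by simp; omega), if_neg (by omega)]
      have harg : ((r (n+1) : ℤ) - ((n+1:ℕ):ℤ)) = (r n : ℤ) - 1 - n := by
        rw [heq]; push_cast; ring
      have harg2 : ((r (n+1) : ℤ) - 1 - ((n+1:ℕ):ℤ)) = (r n : ℤ) - 1 - 1 - n := by
        rw [heq]; push_cast; ring
      rw [harg, harg2]
      linear_combination ih

lemma row_tel (g : ℤ → ℂ) (k : ℕ) (m : ℕ) :
    ∑ j ∈ Finset.range m, (g ((j:ℤ) - k + 1) - 2 * g ((j:ℤ) - k) + g ((j:ℤ) - k - 1))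
      = (g ((m:ℤ) - k) - g ((m:ℤ) - 1 - k)) - (g (-(k:ℤ)) - g (-(k:ℤ) - 1)) := by
  induction m with
  | zero =>
    have h1 : ((0:ℕ):ℤ) - k = -(k:ℤ) := by push_cast; ring
    have h2 : ((0:ℕ):ℤ) - 1 - k = -(k:ℤ) - 1 := by push_cast; ring
    rw [Finset.sum_range_zero, h1, h2]; ring
  | succ m ih =>
    rw [Finset.sum_range_succ, ih]
    have h1 : ((m+1:ℕ):ℤ) - k = (m:ℤ) - k + 1 := by push_cast; ring
    have h2 : ((m+1:ℕ):ℤ) - 1 - k = (m:ℤ) - k := by push_cast; ring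
    have h3 : ((m:ℤ) - 1 - k) = (m:ℤ) - k - 1 := by ring
    rw [h1, h2, h3]; ring

lemma col_tel (g : ℤ → ℂ) (m : ℕ) :
    ∑ k ∈ Finset.range m, (g (-(k:ℤ)) - g (-(k:ℤ) - 1)) = g 0 - g (-(m:ℤ)) := by
  induction m with
  | zero => simp
  | succ m ih =>
    rw [Finset.sum_range_succ, ih]
    have h1 : (-((m+1:ℕ)):ℤ) = -(m:ℤ) - 1 := by push_cast; ring
    rw [h1]; ring

/-- For a Young diagram `μ` with addable boxes `A` and
removable boxes `R`, for every `h ∈ ℂ` and integer `i ≥ 0`: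
`Σ_{c∈A}(h+content c)^i − Σ_{c∈R}(h+content c)^i
  = h^i + Σ_{c∈μ} ((h+e_c+1)^i − 2(h+e_c)^i + (h+e_c−1)^i)`. -/
theorem content_power_sum_identity (μ : YoungDiagram) (A R : Finset (ℕ × ℕ))
    (hA : ∀ c, c ∈ A ↔ IsAddable μ c) (hR : ∀ c, c ∈ R ↔ IsRemovable μ c)
    (h : ℂ) (i : ℕ) :
    ∑ c ∈ A, (h + contentC c) ^ i - ∑ c ∈ R, (h + contentC c) ^ i
      = h ^ i + ∑ c ∈ μ.cells,
          ((h + contentC c + 1) ^ i - 2 * (h + contentC c) ^ i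
            + (h + contentC c - 1) ^ i) := by
  set n := μ.colLen 0 with hn
  set g : ℤ → ℂ := fun x => (h + (x : ℂ)) ^ i with hg
  have hzero : ∀ k, n ≤ k → μ.rowLen k = 0 := by
    intro k hk
    by_contra hne
    have : (k, 0) ∈ μ := YoungDiagram.mem_iff_lt_rowLen.2 (by omega)
    rw [YoungDiagram.mem_iff_lt_colLen] at this
    omega
  have hpos : ∀ k, k < n → 0 < μ.rowLen k := by
    intro k hk
    have : (k, 0) ∈ μ := YoungDiagram.mem_iff_lt_colLen.2 hk
    rw [YoungDiagram.mem_iff_lt_rowLen] at this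
    omega
  have hr : ∀ k, μ.rowLen (k+1) ≤ μ.rowLen k := fun k => μ.rowLen_anti k (k+1) (by omega)
  -- pointwise conversion
  have hpt : ∀ (k j : ℕ) (s : ℤ), ((j:ℤ) + s - k : ℂ) = (((j:ℤ) - k + s : ℤ) : ℂ) := by
    intro k j s; push_cast; ring
  -- identify A
  have hAeq : A = ((Finset.range (n+1)).filter
      fun k => k = 0 ∨ μ.rowLen k < μ.rowLen (k-1)).image fun k => (k, μ.rowLen k) := by
    ext ⟨k, j⟩
    simp only [hA, isAddable_iff, Finset.mem_image, Finset.mem_filter, Finset.mem_range]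
    constructor
    · rintro ⟨rfl, hc⟩
      refine ⟨k, ⟨?_, hc⟩, rfl⟩
      by_contra hk
      have h1 : μ.rowLen k = 0 := hzero k (by omega)
      have h2 : μ.rowLen (k-1) = 0 := hzero (k-1) (by omega)
      omega
    · rintro ⟨a, ⟨_, hc⟩, heq⟩
      obtain ⟨rfl, rfl⟩ : a = k ∧ μ.rowLen a = j := Prod.mk.injEq .. ▸ heq
      exact ⟨rfl, hc⟩
  -- identify R
  have hReq : R = ((Finset.range n).filter
      fun k => μ.rowLen (k+1) < μ.rowLen k).image fun k => (k, μ.rowLen k - 1) := by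
    ext ⟨k, j⟩
    simp only [hR, isRemovable_iff, Finset.mem_image, Finset.mem_filter, Finset.mem_range]
    constructor
    · rintro ⟨h1, h2⟩
      refine ⟨k, ⟨?_, by omega⟩, by simp; omega⟩
      by_contra hk
      have := hzero k (by omega)
      omega
    · rintro ⟨a, ⟨ha, hc⟩, heq⟩
      obtain ⟨hak, hj⟩ : a = k ∧ μ.rowLen a - 1 = j := Prod.mk.injEq .. ▸ heq
      have := hpos a ha
      rw [← hak]
      constructor <;> omega
  -- sum over A
  have sumA : ∑ c ∈ A, (h + contentC c) ^ i
      = ∑ k ∈ Finset.range (n+1),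
          if k = 0 ∨ μ.rowLen k < μ.rowLen (k-1) then g ((μ.rowLen k : ℤ) - k) else 0 := by
    rw [hAeq, Finset.sum_image (by rintro x _ y _ hxy; exact congrArg Prod.fst hxy),
      Finset.sum_filter]
    refine Finset.sum_congr rfl fun k _ => ?_
    split
    · simp only [hg, contentC]; congr 1; push_cast; ring
    · rfl
  -- sum over R
  have sumR : ∑ c ∈ R, (h + contentC c) ^ i
      = ∑ k ∈ Finset.range n,
          if μ.rowLen (k+1) < μ.rowLen k then g ((μ.rowLen k : ℤ) - 1 - k) else 0 := by
    rw [hReq, Finset.sum_image (by rintro x _ y _ hxy; exact congrArg Prod.fst hxy),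
      Finset.sum_filter]
    refine Finset.sum_congr rfl fun k hk => ?_
    split
    · rename_i hck
      have hposk := hpos k (Finset.mem_range.1 hk)
      simp only [hg, contentC]
      congr 1
      rw [Nat.cast_sub (show 1 ≤ μ.rowLen k by omega)]
      push_cast; ring
    · rfl
  -- decompose cells into rows
  have hcells : μ.cells = (Finset.range n).biUnion
      fun k => {k} ×ˢ Finset.range (μ.rowLen k) := by
    ext ⟨k, j⟩
    simp only [YoungDiagram.mem_cells, YoungDiagram.mem_iff_lt_rowLen, Finset.mem_biUnion,
      Finset.mem_range, Finset.mem_product, Finset.mem_singleton]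
    constructor
    · intro hj
      refine ⟨k, ?_, rfl, hj⟩
      by_contra hk
      have := hzero k (by omega)
      omega
    · rintro ⟨a, _, rfl, hj⟩; exact hj
  have sumCells : ∑ c ∈ μ.cells,
        ((h + contentC c + 1) ^ i - 2 * (h + contentC c) ^ i + (h + contentC c - 1) ^ i)
      = ∑ k ∈ Finset.range n,
          ((g ((μ.rowLen k : ℤ) - k) - g ((μ.rowLen k : ℤ) - 1 - k))
            - (g (-(k:ℤ)) - g (-(k:ℤ) - 1))) := by
    rw [hcells, Finset.sum_biUnion]
    · refine Finset.sum_congr rfl fun k _ => ?_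
      rw [Finset.sum_product, Finset.sum_singleton, ← row_tel g k (μ.rowLen k)]
      refine Finset.sum_congr rfl fun j _ => ?_
      simp only [hg, contentC]
      congr 1 <;> · push_cast; ring
    · rintro x _ y _ hxy
      simp only [Finset.disjoint_left]
      rintro ⟨a, b⟩ hab hab'
      simp only [Finset.mem_product, Finset.mem_singleton] at hab hab'
      exact hxy (hab.1 ▸ hab'.1)
  -- put everything together
  rw [sumA, sumR, key_tel g μ.rowLen hr n, sumCells]
  have hsplit : ∑ k ∈ Finset.range n,
        (g ((μ.rowLen k : ℤ) - k) - g ((μ.rowLen k : ℤ) - 1 - k) - (g (-(k:ℤ)) - g (-(k:ℤ) - 1)))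
      = (∑ k ∈ Finset.range n, (g ((μ.rowLen k : ℤ) - k) - g ((μ.rowLen k : ℤ) - 1 - k)))
          - (g 0 - g (-(n:ℤ))) := by
    rw [Finset.sum_sub_distrib, col_tel]
  rw [hsplit, Finset.sum_range_succ]
  have e0 : h ^ i = g 0 := by simp [hg]
  have e1 : ((μ.rowLen n : ℤ) - (n:ℤ)) = -(n:ℤ) := by rw [hzero n le_rfl]; push_cast; ring
  have e2 : ((μ.rowLen n : ℤ) - 1 - (n:ℤ)) = -(n:ℤ) - 1 := by
    rw [hzero n le_rfl]; push_cast; ring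
  rw [e0, e1, e2]
  ring
end
end

section
/- Let N and n be positive integers and U = ℂ^N. Then the following equality of endomorphisms of U^{⊗n} holds: ((N−1)n/2)·id + Σ_{1 ≤ k < l ≤ n} (P_{kl} − Q_{kl}) = −(1/4) Σ_{i,j=1}^{N} ρ(E_{ij} − E_{ji})^2, where E_{ij} are the elementary N×N matrices and ρ(A) := Σ_{k=1}^{n} id^{⊗(k−1)} ⊗ A ⊗ id^{⊗(n−k)} is the diagonal (derivation) action of a matrix A on U^{⊗n}. (This identifies the image of the Jucys–Murphy sum x_1 + ⋯ + x_n with the Casimir element of so(N).) -/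
noncomputable section

open scoped BigOperators

/-- The endomorphism algebra of `U^{⊗n}` for `U = ℂ^N`, realized as matrices
with rows and columns indexed by the multi-indices of the standard basis
`e_{i₁} ⊗ ⋯ ⊗ e_{iₙ}` of `U^{⊗n}`. -/
abbrev TEnd (n N : ℕ) := Matrix (Fin n → Fin N) (Fin n → Fin N) ℂ

/-- The endomorphism `P_{kl}` of `U^{⊗n}` transposing the `k`-th and `l`-th
tensor factors (0-based). -/
def Pmat (n N : ℕ) (k l : Fin n) : TEnd n N :=
  Matrix.of fun w v => if w = v ∘ Equiv.swap k l then 1 else 0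

/-- The endomorphism `Q_{kl}` of `U^{⊗n}` acting as the identity on all
factors except the `k`-th and `l`-th ones (0-based), and there by
`u ⊗ v ↦ (Σᵢ uᵢ vᵢ) · Σⱼ eⱼ ⊗ eⱼ`. -/
def Qmat (n N : ℕ) (k l : Fin n) : TEnd n N :=
  Matrix.of fun w v =>
    if w k = w l ∧ v k = v l ∧ ∀ m, m ≠ k → m ≠ l → w m = v m then 1 else 0

/-- `P_k = P_{k,k+1}` for the 1-based index `k = 1,…,n−1`. -/
def Pk (n N : ℕ) (k : ℕ) : TEnd n N :=
  if h : 1 ≤ k ∧ k + 1 ≤ n then Pmat n N ⟨k - 1, by omega⟩ ⟨k, by omega⟩ else 0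

/-- `Q_k = Q_{k,k+1}` for the 1-based index `k = 1,…,n−1`. -/
def Qk (n N : ℕ) (k : ℕ) : TEnd n N :=
  if h : 1 ≤ k ∧ k + 1 ≤ n then Qmat n N ⟨k - 1, by omega⟩ ⟨k, by omega⟩ else 0

/-- The `n`-th tensor power `g^{⊗n}` of a matrix `g`, acting on `U^{⊗n}`. -/
def tpow (n N : ℕ) (g : Matrix (Fin N) (Fin N) ℂ) : TEnd n N :=
  Matrix.of fun w v => ∏ k : Fin n, g (w k) (v k)

/-- The action of a matrix `A` on the `k`-th tensor factor of `U^{⊗n}`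
(identity on all the other factors). -/
def matAt (n N : ℕ) (k : Fin n) (A : Matrix (Fin N) (Fin N) ℂ) : TEnd n N :=
  Matrix.of fun w v => if ∀ m, m ≠ k → w m = v m then A (w k) (v k) else 0

/-- The diagonal (derivation) action `ρ(A) = Σ_k 1^{⊗(k−1)} ⊗ A ⊗ 1^{⊗(n−k)}`
of a matrix `A` on `U^{⊗n}`. -/
def rho (n N : ℕ) (A : Matrix (Fin N) (Fin N) ℂ) : TEnd n N :=
  ∑ k : Fin n, matAt n N k A


section Aux

lemma matAt_mul_same (n N : ℕ) (k : Fin n) (A B : Matrix (Fin N) (Fin N) ℂ) :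
    matAt n N k A * matAt n N k B = matAt n N k (A * B) := by
  ext w v
  simp only [Matrix.mul_apply, matAt, Matrix.of_apply]
  by_cases h : ∀ m, m ≠ k → w m = v m
  · simp only [if_pos h]
    rw [show (Finset.univ : Finset (Fin n → Fin N)) = Finset.univ.image (fun t => Function.update w k t) ∪ (Finset.univ \ Finset.univ.image (fun t => Function.update w k t)) by
      rw [Finset.union_sdiff_of_subset (Finset.subset_univ _)]]
    rw [Finset.sum_union (Finset.disjoint_sdiff)]
    rw [Finset.sum_image (fun a _ b _ hab => Function.update_injective w k hab)]
    have h2 : ∀ u ∈ Finset.univ \ Finset.univ.image (fun t => Function.update w k t),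
        (if ∀ m, m ≠ k → w m = u m then A (w k) (u k) else 0) *
        (if ∀ m, m ≠ k → u m = v m then B (u k) (v k) else 0) = 0 := by
      intro u hu
      rw [Finset.mem_sdiff, Finset.mem_image] at hu
      rw [if_neg, zero_mul]
      intro hc
      exact hu.2 ⟨u k, Finset.mem_univ _, funext fun m => by
        by_cases hm : m = k
        · subst hm; simp
        · rw [Function.update_of_ne hm, hc m hm]⟩
    rw [Finset.sum_eq_zero h2, add_zero]
    have h3 : ∀ t : Fin N,
        (if ∀ m, m ≠ k → w m = Function.update w k t m then A (w k) (Function.update w k t k) else 0) *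
        (if ∀ m, m ≠ k → Function.update w k t m = v m then B (Function.update w k t k) (v k) else 0)
        = A (w k) t * B t (v k) := by
      intro t
      rw [if_pos (fun m hm => (Function.update_of_ne hm _ _).symm),
          if_pos (fun m hm => (Function.update_of_ne hm _ _).trans (h m hm)), Function.update_self]
    simp_rw [h3]
  · simp only [if_neg h]
    push_neg at h
    obtain ⟨m, hm, hwm⟩ := h
    refine Finset.sum_eq_zero fun u _ => ?_
    by_cases h1 : ∀ m', m' ≠ k → w m' = u m'
    · have h2 : ¬ ∀ m', m' ≠ k → u m' = v m' := fun h2 => hwm ((h1 m hm).trans (h2 m hm))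
      rw [if_neg h2, mul_zero]
    · rw [if_neg h1, zero_mul]

/-- Auxiliary: action of `A ⊗ B` on the `k`-th and `l`-th factors. -/
def twoAt (n N : ℕ) (k l : Fin n) (A B : Matrix (Fin N) (Fin N) ℂ) : TEnd n N :=
  Matrix.of fun w v =>
    if ∀ m, m ≠ k → m ≠ l → w m = v m then A (w k) (v k) * B (w l) (v l) else 0

lemma matAt_mul_ne (n N : ℕ) (k l : Fin n) (hkl : k ≠ l) (A B : Matrix (Fin N) (Fin N) ℂ) :
    matAt n N k A * matAt n N l B = twoAt n N k l A B := by
  ext w v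
  simp only [Matrix.mul_apply, matAt, twoAt, Matrix.of_apply]
  by_cases h : ∀ m, m ≠ k → m ≠ l → w m = v m
  · rw [if_pos h]
    rw [Finset.sum_eq_single (Function.update w k (v k))]
    · rw [if_pos (fun m hm => (Function.update_of_ne hm _ _).symm), Function.update_self,
        if_pos, Function.update_of_ne (Ne.symm hkl)]
      intro m hm
      by_cases hmk : m = k
      · subst hmk; simp
      · rw [Function.update_of_ne hmk]; exact h m hmk hm
    · intro u _ hu
      by_cases h1 : ∀ m', m' ≠ k → w m' = u m'
      · have h2 : ¬ ∀ m', m' ≠ l → u m' = v m' := by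
          intro h2
          apply hu
          funext m
          by_cases hmk : m = k
          · rw [hmk, Function.update_self]; exact h2 k hkl
          · rw [Function.update_of_ne hmk, ← h1 m hmk]
        rw [if_neg h2, mul_zero]
      · rw [if_neg h1, zero_mul]
    · simp
  · rw [if_neg h]
    push_neg at h
    obtain ⟨m, hmk, hml, hwm⟩ := h
    refine Finset.sum_eq_zero fun u _ => ?_
    by_cases h1 : ∀ m', m' ≠ k → w m' = u m'
    · have h2 : ¬ ∀ m', m' ≠ l → u m' = v m' := fun h2 => hwm ((h1 m hmk).trans (h2 m hml))
      rw [if_neg h2, mul_zero]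
    · rw [if_neg h1, zero_mul]

lemma matAt_one (n N : ℕ) (k : Fin n) : matAt n N k 1 = 1 := by
  ext w v
  simp only [matAt, Matrix.of_apply, Matrix.one_apply]
  by_cases h : ∀ m, m ≠ k → w m = v m
  · rw [if_pos h]
    by_cases h2 : w k = v k
    · rw [if_pos h2, if_pos]
      funext m; by_cases hm : m = k
      · rw [hm]; exact h2
      · exact h m hm
    · rw [if_neg h2, if_neg]
      intro hc; exact h2 (congrFun hc k)
  · rw [if_neg h, if_neg]
    intro hc; exact h fun m _ => congrFun hc m

lemma matAt_smul (n N : ℕ) (k : Fin n) (c : ℂ) (A : Matrix (Fin N) (Fin N) ℂ) :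
    matAt n N k (c • A) = c • matAt n N k A := by
  ext w v
  simp only [matAt, Matrix.of_apply, Matrix.smul_apply, smul_eq_mul]
  split <;> simp

lemma matAt_sum (n N : ℕ) (k : Fin n) {ι : Type*} (s : Finset ι)
    (f : ι → Matrix (Fin N) (Fin N) ℂ) :
    matAt n N k (∑ x ∈ s, f x) = ∑ x ∈ s, matAt n N k (f x) := by
  ext w v
  simp only [matAt, Matrix.of_apply, Matrix.sum_apply]
  split <;> simp

lemma Pmat_symm (n N : ℕ) (k l : Fin n) : Pmat n N k l = Pmat n N l k := by
  ext w v; simp only [Pmat, Matrix.of_apply, Equiv.swap_comm]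

lemma Qmat_symm (n N : ℕ) (k l : Fin n) : Qmat n N k l = Qmat n N l k := by
  ext w v
  simp only [Qmat, Matrix.of_apply]
  congr 1
  simp only [eq_iff_iff]
  constructor
  · rintro ⟨h1, h2, h3⟩; exact ⟨h1.symm, h2.symm, fun m hml hmk => h3 m hmk hml⟩
  · rintro ⟨h1, h2, h3⟩; exact ⟨h1.symm, h2.symm, fun m hmk hml => h3 m hml hmk⟩

lemma Pmat_cond (n N : ℕ) (k l : Fin n) (hkl : k ≠ l) (w v : Fin n → Fin N) :
    (w = v ∘ Equiv.swap k l) ↔ (w k = v l ∧ w l = v k ∧ ∀ m, m ≠ k → m ≠ l → w m = v m) := by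
  constructor
  · intro h
    refine ⟨by rw [h]; simp, by rw [h]; simp, fun m hmk hml => by
      rw [h]; simp [Equiv.swap_apply_of_ne_of_ne hmk hml]⟩
  · rintro ⟨h1, h2, h3⟩
    funext m
    rcases eq_or_ne m k with rfl | hmk
    · simpa using h1
    rcases eq_or_ne m l with rfl | hml
    · simpa using h2
    · simpa [Equiv.swap_apply_of_ne_of_ne hmk hml] using h3 m hmk hml

open Matrix in
lemma twoAt_sum (n N : ℕ) (k l : Fin n) (hkl : k ≠ l) :
    ∑ i : Fin N, ∑ j : Fin N,
        twoAt n N k l (Matrix.single i j 1 - Matrix.single j i 1)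
          (Matrix.single i j 1 - Matrix.single j i 1)
      = (2:ℂ) • Qmat n N k l - (2:ℂ) • Pmat n N k l := by
  ext w v
  simp only [Matrix.sum_apply, twoAt, Matrix.of_apply, Matrix.sub_apply, Matrix.smul_apply,
    Qmat, Pmat, Matrix.single, smul_eq_mul]
  by_cases h : ∀ m, m ≠ k → m ≠ l → w m = v m
  · simp only [if_pos h, Pmat_cond n N k l hkl w v]
    simp only [sub_mul, mul_sub, ite_and, Finset.sum_sub_distrib, mul_ite, ite_mul,
      mul_one, mul_zero, one_mul, zero_mul]
    simp [Finset.sum_ite_eq, Finset.sum_ite_eq', eq_comm, and_assoc]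
    have hc : (∀ m : Fin n, ¬k = m → ¬l = m → w m = v m) :=
      fun m h1 h2 => h m (fun e => h1 e.symm) (fun e => h2 e.symm)
    split_ifs <;> first | ring | exact absurd hc (by assumption)
  · simp only [if_neg h, Finset.sum_const_zero]
    rw [if_neg (fun hc => h hc.2.2), if_neg (fun hc => h ((Pmat_cond n N k l hkl w v).1 hc).2.2)]
    ring

open Matrix in
lemma so_sum (N : ℕ) :
    ∑ i : Fin N, ∑ j : Fin N,
      ((Matrix.single i j (1:ℂ) - Matrix.single j i 1) * (Matrix.single i j 1 - Matrix.single j i 1))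
    = ((2:ℂ) - 2*N) • (1 : Matrix (Fin N) (Fin N) ℂ) := by
  ext a b
  simp only [Matrix.sum_apply, Matrix.mul_apply, Matrix.sub_apply, Matrix.single,
    Matrix.of_apply, Matrix.smul_apply, Matrix.one_apply, smul_eq_mul]
  simp only [sub_mul, mul_sub, ite_and, Finset.sum_sub_distrib, mul_ite, ite_mul, mul_one,
    mul_zero, one_mul, zero_mul]
  simp [Finset.sum_ite_eq, Finset.sum_ite_eq', eq_comm]
  split <;> ring

end Aux


lemma sum_sum_comm4 {M : Type*} [AddCommMonoid M] {a b c d : Type*} [Fintype a] [Fintype b]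
    [Fintype c] [Fintype d] (f : a → b → c → d → M) :
    ∑ i : a, ∑ j : b, ∑ k : c, ∑ l : d, f i j k l
      = ∑ k : c, ∑ l : d, ∑ i : a, ∑ j : b, f i j k l :=
  calc ∑ i : a, ∑ j : b, ∑ k : c, ∑ l : d, f i j k l
      = ∑ i : a, ∑ k : c, ∑ j : b, ∑ l : d, f i j k l :=
        Finset.sum_congr rfl fun _ _ => Finset.sum_comm
    _ = ∑ k : c, ∑ i : a, ∑ j : b, ∑ l : d, f i j k l := Finset.sum_comm
    _ = ∑ k : c, ∑ i : a, ∑ l : d, ∑ j : b, f i j k l :=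
        Finset.sum_congr rfl fun _ _ => Finset.sum_congr rfl fun _ _ => Finset.sum_comm
    _ = ∑ k : c, ∑ l : d, ∑ i : a, ∑ j : b, f i j k l :=
        Finset.sum_congr rfl fun _ _ => Finset.sum_comm

/-- On `U^{⊗n}`, `((N−1)n/2)·id + Σ_{k<l} (P_{kl} − Q_{kl})`
equals `−(1/4) Σ_{i,j} ρ(E_{ij} − E_{ji})²`, the Casimir element of `so(N)`. -/
theorem jucysMurphy_sum_eq_casimir (n N : ℕ) (hn : 1 ≤ n) (hN : 1 ≤ N) :
    ((((N : ℂ) - 1) * (n : ℂ)) / 2) • (1 : TEnd n N)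
        + ∑ p ∈ Finset.univ.filter (fun p : Fin n × Fin n => p.1 < p.2),
            (Pmat n N p.1 p.2 - Qmat n N p.1 p.2)
      = (-(1/4 : ℂ)) • ∑ i : Fin N, ∑ j : Fin N,
          (rho n N (Matrix.single i j 1 - Matrix.single j i 1)) ^ 2 := by
  classical
  set A : Fin N → Fin N → Matrix (Fin N) (Fin N) ℂ :=
    fun i j => Matrix.single i j 1 - Matrix.single j i 1 with hA
  have key : ∀ k l : Fin n,
      (∑ i : Fin N, ∑ j : Fin N, matAt n N k (A i j) * matAt n N l (A i j))
      = if k = l then ((2:ℂ) - 2*N) • (1 : TEnd n N)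
        else (2:ℂ) • Qmat n N k l - (2:ℂ) • Pmat n N k l := by
    intro k l
    rcases eq_or_ne k l with rfl | hkl
    · rw [if_pos rfl]
      simp_rw [matAt_mul_same, ← matAt_sum]
      rw [hA, so_sum, matAt_smul, matAt_one]
    · rw [if_neg hkl]
      simp_rw [matAt_mul_ne n N k l hkl]
      rw [hA]
      exact twoAt_sum n N k l hkl
  have expand : (∑ i : Fin N, ∑ j : Fin N, (rho n N (A i j)) ^ 2)
      = ∑ q : Fin n × Fin n, ∑ i : Fin N, ∑ j : Fin N,
          matAt n N q.1 (A i j) * matAt n N q.2 (A i j) := by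
    rw [Fintype.sum_prod_type]
    simp_rw [rho, sq, Finset.sum_mul_sum]
    exact sum_sum_comm4 fun i j k l => matAt n N k (A i j) * matAt n N l (A i j)
  have hdiag : (∑ q ∈ Finset.univ.filter (fun q : Fin n × Fin n => q.1 = q.2),
      (if q.1 = q.2 then ((2:ℂ) - 2*N) • (1 : TEnd n N)
        else (2:ℂ) • Qmat n N q.1 q.2 - (2:ℂ) • Pmat n N q.1 q.2))
      = ((n : ℂ) * ((2:ℂ) - 2*N)) • (1 : TEnd n N) := by
    rw [Finset.sum_congr rfl (fun q hq => if_pos (Finset.mem_filter.1 hq).2),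
      Finset.sum_const]
    have hcard : (Finset.univ.filter (fun q : Fin n × Fin n => q.1 = q.2)).card = n := by
      have himg : Finset.univ.filter (fun q : Fin n × Fin n => q.1 = q.2)
          = Finset.univ.image (fun k : Fin n => (k, k)) := by
        ext q
        simp only [Finset.mem_filter, Finset.mem_image, Finset.mem_univ, true_and]
        constructor
        · intro hq; exact ⟨q.1, by rw [Prod.ext_iff]; exact ⟨rfl, hq⟩⟩
        · rintro ⟨k, rfl⟩; rfl
      rw [himg, Finset.card_image_of_injective _ (fun a b hab => congrArg Prod.fst hab),
        Finset.card_univ, Fintype.card_fin]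
    rw [hcard, ← Nat.cast_smul_eq_nsmul ℂ, smul_smul]
  have hoff : (∑ q ∈ Finset.univ.filter (fun q : Fin n × Fin n => ¬ q.1 = q.2),
      (if q.1 = q.2 then ((2:ℂ) - 2*N) • (1 : TEnd n N)
        else (2:ℂ) • Qmat n N q.1 q.2 - (2:ℂ) • Pmat n N q.1 q.2))
      = (∑ q ∈ Finset.univ.filter (fun q : Fin n × Fin n => q.1 < q.2),
          ((2:ℂ) • Qmat n N q.1 q.2 - (2:ℂ) • Pmat n N q.1 q.2))
        + (∑ q ∈ Finset.univ.filter (fun q : Fin n × Fin n => q.1 < q.2),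
          ((2:ℂ) • Qmat n N q.1 q.2 - (2:ℂ) • Pmat n N q.1 q.2)) := by
    rw [Finset.sum_congr rfl (fun q hq => if_neg (Finset.mem_filter.1 hq).2)]
    have hsplit : Finset.univ.filter (fun q : Fin n × Fin n => ¬ q.1 = q.2)
        = Finset.univ.filter (fun q : Fin n × Fin n => q.1 < q.2)
          ∪ Finset.univ.filter (fun q : Fin n × Fin n => q.2 < q.1) := by
      ext q
      simp only [Finset.mem_filter, Finset.mem_union, Finset.mem_univ, true_and]
      constructor
      · intro hq; exact (Ne.lt_or_gt hq)
      · rintro (h | h)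
        · exact h.ne
        · exact h.ne'
    have hdisj : Disjoint (Finset.univ.filter (fun q : Fin n × Fin n => q.1 < q.2))
        (Finset.univ.filter (fun q : Fin n × Fin n => q.2 < q.1)) := by
      rw [Finset.disjoint_left]
      intro q h1 h2
      exact absurd ((Finset.mem_filter.1 h2).2) (not_lt_of_gt (Finset.mem_filter.1 h1).2)
    rw [hsplit, Finset.sum_union hdisj]
    congr 1
    refine Finset.sum_nbij' Prod.swap Prod.swap ?_ ?_ ?_ ?_ ?_
    · intro a ha
      simp only [Finset.mem_filter, Finset.mem_univ, true_and, Prod.fst_swap,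
        Prod.snd_swap] at ha ⊢
      exact ha
    · intro a ha
      simp only [Finset.mem_filter, Finset.mem_univ, true_and, Prod.fst_swap,
        Prod.snd_swap] at ha ⊢
      exact ha
    · intro a _; rfl
    · intro a _; rfl
    · intro a _
      simp only [Prod.fst_swap, Prod.snd_swap]
      rw [Qmat_symm, Pmat_symm]
  have rhs_eq : (∑ i : Fin N, ∑ j : Fin N, (rho n N (A i j)) ^ 2)
      = ((n : ℂ) * ((2:ℂ) - 2*N)) • (1 : TEnd n N)
        + ((∑ q ∈ Finset.univ.filter (fun q : Fin n × Fin n => q.1 < q.2),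
            ((2:ℂ) • Qmat n N q.1 q.2 - (2:ℂ) • Pmat n N q.1 q.2))
          + (∑ q ∈ Finset.univ.filter (fun q : Fin n × Fin n => q.1 < q.2),
            ((2:ℂ) • Qmat n N q.1 q.2 - (2:ℂ) • Pmat n N q.1 q.2))) := by
    rw [expand, Finset.sum_congr rfl (fun q (_ : q ∈ Finset.univ) => key q.1 q.2),
      ← Finset.sum_filter_add_sum_filter_not Finset.univ (fun q : Fin n × Fin n => q.1 = q.2),
      hdiag, hoff]
  rw [show (∑ i : Fin N, ∑ j : Fin N,
        (rho n N (Matrix.single i j 1 - Matrix.single j i 1)) ^ 2)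
      = ∑ i : Fin N, ∑ j : Fin N, (rho n N (A i j)) ^ 2 from rfl, rhs_eq]
  rw [smul_add, smul_smul,
    show (-(1/4:ℂ)) * ((n:ℂ) * ((2:ℂ) - 2*N)) = ((N:ℂ) - 1) * n / 2 by ring]
  congr 1
  rw [← Finset.sum_add_distrib, Finset.smul_sum]
  refine Finset.sum_congr rfl fun q _ => ?_
  module
end
end
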